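/- arXiv:2212.09186 — 5 statements merged into one kernel-verified Lean document; each statement's English description precedes it below -/
import Mathlib

section
/- Let X, Y, W be real Banach spaces, let L be a nonempty symmetric closed subset of S_X × S_{Y*} having property (P), and let (Z, ‖·‖_Z) be a Banach space which is a linear subspace of C_{b,e}(L, W) such that (i) ‖Φ‖_Z ≥ ‖Φ‖_∞ for all Φ ∈ Z, and (ii) Z contains every map [T]⊕w : (x,y*) ↦ y*(T(x))·w with T : X → Y a finite-rank bounded linear operator and w ∈ W, with ‖[T]⊕w‖_Z ≤ ‖T‖·‖w‖. Then the following Bishop–Phelps–Bollobás property holds: for every ε > 0 there exists η(ε) > 0 such that whenever Φ ∈ Z with ‖Φ‖_∞ = 1 and (x,y*) ∈ L satisfy ‖Φ(x,y*)‖ > 1 − η(ε), there exist Ψ ∈ Z with ‖Ψ‖_∞ = 1 and (z,t*) ∈ L such that ‖Ψ(z,t*)‖ = 1, ‖x−z‖ + ‖y*−t*‖ < ε and ‖Ψ−Φ‖_∞ < ε. -/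
open Filter Topology Set

noncomputable section

variable {X Y W : Type*}
  [NormedAddCommGroup X] [NormedSpace ℝ X]
  [NormedAddCommGroup Y] [NormedSpace ℝ Y]
  [NormedAddCommGroup W] [NormedSpace ℝ W]

/-- The Hausdorff distance between the symmetric pairs `Γ p = {p, -p}` and `Γ q = {q, -q}`
in `X × Y*` with the sum norm. -/
def dHG (p q : X × (Y →L[ℝ] ℝ)) : ℝ :=
  min (‖p.1 - q.1‖ + ‖p.2 - q.2‖) (‖p.1 + q.1‖ + ‖p.2 + q.2‖)

/-- Property (P) for a subset `L ⊆ S_X × S_{Y*}`. -/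
def PropP (L : Set (X × (Y →L[ℝ] ℝ))) : Prop :=
  ∃ ε₀ > (0 : ℝ), ∀ ε : ℝ, 0 < ε → ε < ε₀ → ∃ ϖ > (0 : ℝ), ∀ p ∈ L,
    ∃ (xs : X →L[ℝ] ℝ) (ye : Y), ‖xs‖ ≤ 1 ∧ ‖ye‖ ≤ 1 ∧
      ∀ q ∈ L, ε ≤ dHG p q → |xs q.1| + |q.2 ye| ≤ xs p.1 + p.2 ye - ϖ

/-- The sup norm `‖Φ‖_∞` of a function over `L`. -/
def supNormOn (L : Set (X × (Y →L[ℝ] ℝ))) (Φ : X × (Y →L[ℝ] ℝ) → W) : ℝ :=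
  sSup ((fun p => ‖Φ p‖) '' L)

/-- Membership in `C_{b,e}(L, W)`: bounded, continuous (on `L`) and even. -/
def IsCbe (L : Set (X × (Y →L[ℝ] ℝ))) (Φ : X × (Y →L[ℝ] ℝ) → W) : Prop :=
  ContinuousOn Φ L ∧ BddAbove ((fun p => ‖Φ p‖) '' L) ∧ ∀ p ∈ L, Φ (-p) = Φ p

/-- `Φ` attains `d_H`-strongly its maximum on `L`. -/
def AttainsDHStrongly (L : Set (X × (Y →L[ℝ] ℝ))) (Φ : X × (Y →L[ℝ] ℝ) → W) : Prop :=
  ∃ p₀ ∈ L, ‖Φ p₀‖ = supNormOn L Φ ∧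
    ∀ u : ℕ → X × (Y →L[ℝ] ℝ), (∀ n, u n ∈ L) →
      Tendsto (fun n => ‖Φ (u n)‖) atTop (𝓝 (supNormOn L Φ)) →
      Tendsto (fun n => dHG (u n) p₀) atTop (𝓝 0)

/-- A finite-rank continuous linear operator. -/
def FinRank (T : X →L[ℝ] Y) : Prop :=
  FiniteDimensional ℝ ↥(LinearMap.range T.toLinearMap)

/-- A porous subset of a (pseudo)metric space. -/
def IsPorous {M : Type*} [PseudoMetricSpace M] (A : Set M) : Prop :=
  ∃ lam : ℝ, 0 < lam ∧ lam ≤ 1 ∧ ∃ r₀ > (0 : ℝ), ∀ x : M, ∀ r : ℝ, 0 < r → r ≤ r₀ →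
    ∃ y : M, Metric.ball y (lam * r) ⊆ Metric.ball x r ∩ Aᶜ

/-- A σ-porous subset of a (pseudo)metric space. -/
def IsSigmaPorous {M : Type*} [PseudoMetricSpace M] (A : Set M) : Prop :=
  ∃ f : ℕ → Set M, (∀ n, IsPorous (f n)) ∧ A = ⋃ n, f n

/-!
By property (P), at each `p ∈ L` some `(x*, y)` in the unit balls beats by a gap `ϖ`, at `p`, its
value `|x*(z)| + |t*(y)|` at every `(z, t*) ∈ L` that is `e`-far from `{p, -p}`. With `g` norming
`p.1` and `p.2 (y') ≈ 1`, the form `g(z) t*(y) + x*(z) t*(y')` is `t*(T z)` for a rank-two `T`, so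
adding `r · [T] ⊕ (Φ(p)/‖Φ(p)‖)` to `Φ` costs at most `2r` and raises `‖Φ‖` at `p` by about `r ϖ/2`
more than anywhere far from `{p, -p}`. Hence every almost-maximiser of the perturbed function is
close to `p` or to `-p`, and by evenness we may take it close to `p`. Iterating at geometrically
shrinking scales produces Cauchy sequences of functions and points; the limit function attains its
norm at the limit point, and normalising it gives `Ψ`.
-/

open scoped BoundedContinuousFunction

theorem exists_seq_of_forall_exists_succ {α : Type*} {P : ℕ → α → Prop} {R : ℕ → α → α → Prop}
    {a : α} (ha : P 0 a) (step : ∀ n a, P n a → ∃ b, P (n + 1) b ∧ R n a b) :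
    ∃ u : ℕ → α, u 0 = a ∧ (∀ n, P n (u n)) ∧ ∀ n, R n (u n) (u (n + 1)) := by
  choose next hnextP hnextR using step
  let u : ∀ n, {b // P n b} := fun n =>
    Nat.rec ⟨a, ha⟩ (fun n b => ⟨next n b b.2, hnextP n b b.2⟩) n
  exact ⟨fun n => (u n).1, rfl, fun n => (u n).2, fun n => hnextR n (u n).1 (u n).2⟩

theorem exists_pos_add_succ_le {a : ℕ → ℝ} (ha : ∀ n, 0 < a n) :
    ∃ γ : ℕ → ℝ, (∀ n, 0 < γ n) ∧ (∀ n, γ n ≤ a n / 2) ∧ ∀ n, γ n + γ (n + 1) ≤ a n := by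
  refine ⟨fun n => min (a n) (a (n - 1)) / 2,
    fun n => by have := lt_min (ha n) (ha (n - 1)); positivity,
    fun n => by dsimp only; gcongr; exact min_le_left _ _, fun n => ?_⟩
  dsimp only
  rw [Nat.add_sub_cancel]
  linarith [min_le_left (a n) (a (n - 1)), min_le_right (a (n + 1)) (a n)]

theorem Prod.dist_le_norm_sub_add_norm_sub {E F : Type*} [SeminormedAddCommGroup E]
    [SeminormedAddCommGroup F] (p q : E × F) : dist p q ≤ ‖p.1 - q.1‖ + ‖p.2 - q.2‖ := by
  rw [Prod.dist_eq, dist_eq_norm, dist_eq_norm]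
  exact max_le (le_add_of_nonneg_right (norm_nonneg _)) (le_add_of_nonneg_left (norm_nonneg _))

theorem Prod.norm_sub_add_norm_sub_le_two_mul_dist {E F : Type*} [SeminormedAddCommGroup E]
    [SeminormedAddCommGroup F] (p q : E × F) : ‖p.1 - q.1‖ + ‖p.2 - q.2‖ ≤ 2 * dist p q := by
  rw [Prod.dist_eq, ← dist_eq_norm, ← dist_eq_norm]
  linarith [le_max_left (dist p.1 q.1) (dist p.2 q.2), le_max_right (dist p.1 q.1) (dist p.2 q.2)]

theorem norm_inv_norm_smul_sub_le {E : Type*} [NormedAddCommGroup E] [NormedSpace ℝ E] {u v : E}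
    (hv : ‖v‖ = 1) : ‖‖u‖⁻¹ • u - v‖ ≤ 2 * ‖u - v‖ := by
  rcases eq_or_ne u 0 with rfl | hu
  · simp [hv]
  have hscale : ‖‖u‖⁻¹ • u - u‖ = |‖v‖ - ‖u‖| := by
    have hu' : ‖u‖ ≠ 0 := norm_ne_zero_iff.2 hu
    calc ‖‖u‖⁻¹ • u - u‖ = ‖(‖u‖⁻¹ - 1) • u‖ := by rw [sub_smul, one_smul]
      _ = |‖u‖⁻¹ - 1| * |‖u‖| := by rw [norm_smul, Real.norm_eq_abs, abs_norm]
      _ = |‖v‖ - ‖u‖| := by rw [← abs_mul, sub_mul, inv_mul_cancel₀ hu', one_mul, hv]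
  calc ‖‖u‖⁻¹ • u - v‖ ≤ ‖‖u‖⁻¹ • u - u‖ + ‖u - v‖ := norm_sub_le_norm_sub_add_norm_sub _ _ _
    _ ≤ ‖u - v‖ + ‖u - v‖ := by
        rw [hscale]; linarith [abs_norm_sub_norm_le v u, norm_sub_rev v u]
    _ = 2 * ‖u - v‖ := by ring

theorem norm_add_smul_add_le {E : Type*} [SeminormedAddCommGroup E] [NormedSpace ℝ E] {a v : E}
    {N m r t t₀ β : ℝ} (ha : ‖a‖ ≤ N) (hv : ‖v‖ = 1) (hm : 0 ≤ m) (hr : 0 ≤ r) (hβ : 0 ≤ β)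
    (ht : |t| ≤ t₀ - β) : ‖a + (r * t) • v‖ + m + r * β ≤ N + ‖m • v + (r * t₀) • v‖ := by
  have ht₀ : 0 ≤ t₀ := by linarith [abs_nonneg t]
  have hrt : ‖(r * t) • v‖ = r * |t| := by
    rw [norm_smul, hv, mul_one, Real.norm_eq_abs, abs_mul, abs_of_nonneg hr]
  rw [← add_smul, norm_smul, hv, mul_one, Real.norm_of_nonneg (by positivity)]
  linarith [norm_add_le a ((r * t) • v), mul_le_mul_of_nonneg_left ht hr]

theorem ContinuousLinearMap.abs_apply_le_one {E : Type*} [SeminormedAddCommGroup E]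
    [NormedSpace ℝ E] {f : E →L[ℝ] ℝ} (hf : ‖f‖ ≤ 1) {x : E} (hx : ‖x‖ ≤ 1) : |f x| ≤ 1 := by
  rw [← Real.norm_eq_abs]
  exact (f.le_opNorm x).trans (mul_le_one₀ hf (norm_nonneg x) hx)

theorem ContinuousLinearMap.exists_norm_le_one_lt_apply {E : Type*} [NormedAddCommGroup E]
    [NormedSpace ℝ E] (f : E →L[ℝ] ℝ) {c : ℝ} (hc : c < ‖f‖) : ∃ x : E, ‖x‖ ≤ 1 ∧ c < f x := by
  obtain ⟨x, hx, hcx⟩ := f.exists_lt_apply_of_lt_opNorm hc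
  rw [Real.norm_eq_abs] at hcx
  rcases lt_abs.1 hcx with h | h
  · exact ⟨x, hx.le, h⟩
  · exact ⟨-x, (norm_neg x).le.trans hx.le, by rwa [map_neg]⟩

theorem FinRank.add {S T : X →L[ℝ] Y} (hS : FinRank S) (hT : FinRank T) : FinRank (S + T) :=
  have : FiniteDimensional ℝ (LinearMap.range S.toLinearMap) := hS
  have : FiniteDimensional ℝ (LinearMap.range T.toLinearMap) := hT
  Submodule.finiteDimensional_of_le (LinearMap.range_add_le S.toLinearMap T.toLinearMap)

theorem finRank_smulRight (f : X →L[ℝ] ℝ) (y : Y) : FinRank (f.smulRight y) := by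
  refine Submodule.finiteDimensional_of_le (S₂ := Submodule.span ℝ {y}) ?_
  rintro _ ⟨x, rfl⟩
  exact Submodule.smul_mem _ _ (Submodule.subset_span rfl)

theorem exists_finRank_peak {x : X} (hx : ‖x‖ = 1) {f : Y →L[ℝ] ℝ} (hf : ‖f‖ = 1)
    {xs : X →L[ℝ] ℝ} {ye : Y} (hxs : ‖xs‖ ≤ 1) (hye : ‖ye‖ ≤ 1) {θ : ℝ} (hθ : 0 < θ) :
    ∃ T : X →L[ℝ] Y, FinRank T ∧ ‖T‖ ≤ 2 ∧ xs x + f ye - θ ≤ f (T x) ∧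
      ∀ (z : X) (t : Y →L[ℝ] ℝ), ‖z‖ ≤ 1 → ‖t‖ ≤ 1 → |t (T z)| ≤ |xs z| + |t ye| := by
  obtain ⟨g, hg, hgx⟩ := exists_dual_vector'' ℝ x
  obtain ⟨y, hy, hfy⟩ := f.exists_norm_le_one_lt_apply (c := 1 - θ) (by linarith)
  have hT : ∀ (z : X) (t : Y →L[ℝ] ℝ),
      t ((g.smulRight ye + xs.smulRight y) z) = g z * t ye + xs z * t y := by
    intro z t
    simp only [add_apply, ContinuousLinearMap.smulRight_apply, map_add, map_smul, smul_eq_mul]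
  refine ⟨g.smulRight ye + xs.smulRight y, (finRank_smulRight g ye).add (finRank_smulRight xs y),
    ?_, ?_, fun z t hz ht => ?_⟩
  · refine (norm_add_le _ _).trans ?_
    rw [ContinuousLinearMap.norm_smulRight_apply, ContinuousLinearMap.norm_smulRight_apply]
    linarith [mul_le_one₀ hg (norm_nonneg _) hye, mul_le_one₀ hxs (norm_nonneg _) hy]
  · -- `xs x * f y ≥ xs x - θ` because `|xs x| ≤ 1` and `1 - θ < f y ≤ 1`
    have hgx1 : g x = 1 := by simpa [hx] using hgx
    have hxs1 := abs_le.1 (xs.abs_apply_le_one hxs hx.le)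
    have hfy1 := (abs_le.1 (f.abs_apply_le_one hf.le hy)).2
    rw [hT, hgx1]
    nlinarith
  · rw [hT]
    calc |g z * t ye + xs z * t y| ≤ |g z| * |t ye| + |xs z| * |t y| := by
          rw [← abs_mul, ← abs_mul]; exact abs_add_le _ _
      _ ≤ 1 * |t ye| + |xs z| * 1 := by
          gcongr
          exacts [g.abs_apply_le_one hg hz, t.abs_apply_le_one ht hy]
      _ = |xs z| + |t ye| := by ring

namespace BoundedContinuousFunction

variable {α E : Type*} [TopologicalSpace α] [SeminormedAddCommGroup E]

theorem exists_lt_norm_apply [Nonempty α] (f : α →ᵇ E) {c : ℝ} (hc : c < ‖f‖) :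
    ∃ x, c < ‖f x‖ := by
  rw [norm_eq_iSup_norm] at hc
  exact exists_lt_of_lt_ciSup hc

theorem norm_apply_eq_norm_of_tendsto {f : ℕ → α →ᵇ E} {g : α →ᵇ E} {x : ℕ → α} {a : α}
    {γ : ℕ → ℝ} (hf : Tendsto f atTop (𝓝 g)) (hx : Tendsto x atTop (𝓝 a))
    (hγ : Tendsto γ atTop (𝓝 0)) (hnear : ∀ n, ‖f n‖ - γ n ≤ ‖f n (x n)‖) : ‖g a‖ = ‖g‖ := by
  have hval : Tendsto (fun n => ‖f n (x n)‖) atTop (𝓝 ‖g a‖) :=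
    ((continuous_eval.tendsto (g, a)).comp (hf.prodMk_nhds hx)).norm
  refine le_antisymm (g.norm_coe_le_norm a) ?_
  simpa using le_of_tendsto_of_tendsto' (hf.norm.sub hγ) hval hnear

end BoundedContinuousFunction

/-- The condition of property (P) at scale `ε` with gap `ϖ`. -/
def UniformlySeparated (L : Set (X × (Y →L[ℝ] ℝ))) (ε ϖ : ℝ) : Prop :=
  ∀ p ∈ L, ∃ (xs : X →L[ℝ] ℝ) (ye : Y), ‖xs‖ ≤ 1 ∧ ‖ye‖ ≤ 1 ∧
    ∀ q ∈ L, ε ≤ dHG p q → |xs q.1| + |q.2 ye| ≤ xs p.1 + p.2 ye - ϖ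

theorem UniformlySeparated.mono {L : Set (X × (Y →L[ℝ] ℝ))} {ε ϖ ϖ' : ℝ}
    (h : UniformlySeparated L ε ϖ) (hϖ : ϖ' ≤ ϖ) : UniformlySeparated L ε ϖ' := by
  intro p hp
  obtain ⟨xs, ye, hxs, hye, hsep⟩ := h p hp
  exact ⟨xs, ye, hxs, hye, fun q hq hpq => (hsep q hq hpq).trans (by linarith)⟩

theorem PropP.exists_uniformlySeparated {L : Set (X × (Y →L[ℝ] ℝ))} (hP : PropP L) :
    ∃ ε₀ > (0 : ℝ), ∀ ε, 0 < ε → ε < ε₀ → ∃ ϖ, 0 < ϖ ∧ ϖ ≤ 1 ∧ UniformlySeparated L ε ϖ := by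
  obtain ⟨ε₀, hε₀, hP⟩ := hP
  refine ⟨ε₀, hε₀, fun ε hε hεε₀ => ?_⟩
  obtain ⟨ϖ, hϖ, hsep⟩ := hP ε hε hεε₀
  exact ⟨min ϖ 1, lt_min hϖ one_pos, min_le_right _ _,
    UniformlySeparated.mono hsep (min_le_left _ _)⟩

/-- `F` realises `Z` as a subspace of `C_{b,e}(L, W)` satisfying (i) and (ii). -/
structure IsAdmissible {L : Set (X × (Y →L[ℝ] ℝ))} {Z : Type*} [NormedAddCommGroup Z]
    [NormedSpace ℝ Z] (F : Z →L[ℝ] (L →ᵇ W)) : Prop where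
  norm_apply_le : ∀ Φ, ‖F Φ‖ ≤ ‖Φ‖
  apply_neg : ∀ Φ (q : L) (hq : -(q : X × (Y →L[ℝ] ℝ)) ∈ L), F Φ ⟨-q, hq⟩ = F Φ q
  exists_eq_finRank : ∀ T : X →L[ℝ] Y, FinRank T → ∀ w : W,
    ∃ Θ : Z, (∀ q : L, F Θ q = q.1.2 (T q.1.1) • w) ∧ ‖Θ‖ ≤ ‖T‖ * ‖w‖

namespace IsAdmissible

variable {L : Set (X × (Y →L[ℝ] ℝ))} {Z : Type*} [NormedAddCommGroup Z] [NormedSpace ℝ Z]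
  {F : Z →L[ℝ] (L →ᵇ W)}

theorem exists_perturbation (hF : IsAdmissible F) (hsphere : ∀ p ∈ L, ‖p.1‖ = 1 ∧ ‖p.2‖ = 1)
    {e ϖ : ℝ} (hϖ : 0 < ϖ) (hsep : UniformlySeparated L e ϖ) (Φ : Z) (p : L) (hp : F Φ p ≠ 0)
    {r : ℝ} (hr : 0 ≤ r) :
    ∃ Φ' : Z, ‖Φ' - Φ‖ ≤ 2 * r ∧ ∀ q : L, e ≤ dHG (p : X × (Y →L[ℝ] ℝ)) q →
      ‖F Φ' q‖ + ‖F Φ p‖ + r * (ϖ / 2) ≤ ‖F Φ‖ + ‖F Φ' p‖ := by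
  obtain ⟨hp₁, hp₂⟩ := hsphere p p.2
  obtain ⟨xs, ye, hxs, hye, hfar⟩ := hsep p p.2
  obtain ⟨T, hTfin, hT, hTp, hTq⟩ := exists_finRank_peak hp₁ hp₂ hxs hye (half_pos hϖ)
  set w := F Φ p
  set v := ‖w‖⁻¹ • w
  have hv : ‖v‖ = 1 := norm_smul_inv_norm hp
  have hw : ‖w‖ • v = w := smul_inv_smul₀ (norm_ne_zero_iff.2 hp) w
  obtain ⟨Θ, hΘ, hΘle⟩ := hF.exists_eq_finRank T hTfin v
  have hval : ∀ q : L, F (Φ + r • Θ) q = F Φ q + (r * q.1.2 (T q.1.1)) • v := by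
    intro q
    rw [map_add, map_smul, BoundedContinuousFunction.add_apply,
      BoundedContinuousFunction.smul_apply, hΘ, smul_smul]
  refine ⟨Φ + r • Θ, ?_, fun q hq => ?_⟩
  · rw [add_sub_cancel_left, norm_smul, Real.norm_of_nonneg hr, mul_comm r]
    rw [hv, mul_one] at hΘle
    exact mul_le_mul_of_nonneg_right (hΘle.trans hT) hr
  · obtain ⟨hq₁, hq₂⟩ := hsphere q q.2
    have hgap : |q.1.2 (T q.1.1)| ≤ p.1.2 (T p.1.1) - ϖ / 2 := by
      linarith [hTq _ _ hq₁.le hq₂.le, hfar q q.2 hq]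
    have key := norm_add_smul_add_le ((F Φ).norm_coe_le_norm q) hv (norm_nonneg w) hr
      (by positivity) hgap
    rwa [hw, ← hval, ← hval] at key

theorem exists_near_max_dist_lt (hF : IsAdmissible F)
    (hsphere : ∀ p ∈ L, ‖p.1‖ = 1 ∧ ‖p.2‖ = 1) (hsym : ∀ p ∈ L, -p ∈ L)
    {e ϖ : ℝ} (hϖ : 0 < ϖ) (hsep : UniformlySeparated L e ϖ) {Φ : Z} {p : L} {γ γ' r : ℝ}
    (hγ : γ ≤ ‖F Φ‖) (hp : ‖F Φ‖ - γ < ‖F Φ p‖) (hγ' : 0 < γ') (hr : γ + γ' ≤ r * (ϖ / 2)) :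
    ∃ (Φ' : Z) (p' : L), ‖Φ' - Φ‖ ≤ 2 * r ∧ dist p p' < e ∧ ‖F Φ'‖ - γ' < ‖F Φ' p'‖ := by
  have hγ0 : 0 < γ := by linarith [(F Φ).norm_coe_le_norm p]
  have hr0 : 0 ≤ r := by nlinarith
  have hp0 : F Φ p ≠ 0 := by
    intro h
    rw [h, norm_zero] at hp
    linarith
  obtain ⟨Φ', hΦ', hpeak⟩ := hF.exists_perturbation hsphere hϖ hsep Φ p hp0 hr0
  have : Nonempty L := ⟨p⟩
  obtain ⟨q, hq⟩ := (F Φ').exists_lt_norm_apply (c := ‖F Φ'‖ - γ') (by linarith)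
  have hclose : dHG (p : X × (Y →L[ℝ] ℝ)) q < e := by
    by_contra! hfar
    linarith [hpeak q hfar, (F Φ').norm_coe_le_norm p]
  rcases min_lt_iff.1 hclose with h | h
  · exact ⟨Φ', q, hΦ', (Prod.dist_le_norm_sub_add_norm_sub _ _).trans_lt h, hq⟩
  · refine ⟨Φ', ⟨-q, hsym q q.2⟩, hΦ', ?_, by rwa [hF.apply_neg]⟩
    refine (Prod.dist_le_norm_sub_add_norm_sub (p : X × (Y →L[ℝ] ℝ)) (-q)).trans_lt ?_
    simpa only [Prod.fst_neg, Prod.snd_neg, sub_neg_eq_add] using h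

theorem exists_seq_near_max (hF : IsAdmissible F)
    (hsphere : ∀ p ∈ L, ‖p.1‖ = 1 ∧ ‖p.2‖ = 1) (hsym : ∀ p ∈ L, -p ∈ L) {δ : ℝ} (hδ : 0 < δ)
    (hδ₁ : δ ≤ 1) {ϖ γ : ℕ → ℝ} (hϖ : ∀ n, 0 < ϖ n)
    (hsep : ∀ n, UniformlySeparated L (δ / 4 * (1 / 2) ^ n) (ϖ n)) (hγ : ∀ n, 0 < γ n)
    (hγ₁ : ∀ n, γ n ≤ 1 / 2) (hγϖ : ∀ n, γ n + γ (n + 1) ≤ δ / 8 * (1 / 2) ^ n * (ϖ n / 2))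
    {Φ : Z} (hΦ : ‖F Φ‖ = 1) {p : L} (hp : 1 - γ 0 < ‖F Φ p‖) :
    ∃ u : ℕ → Z × L, u 0 = (Φ, p) ∧ (∀ n, ‖F (u n).1‖ - γ n < ‖F (u n).1 (u n).2‖) ∧
      ∀ n, dist (u n) (u (n + 1)) ≤ δ / 4 * (1 / 2) ^ n := by
  -- the first invariant keeps `‖F s.1‖ ≥ 1 / 2 ≥ γ n`, as the step needs
  refine (exists_seq_of_forall_exists_succ
    (P := fun n s => ‖s.1 - Φ‖ ≤ δ / 2 - δ / 2 * (1 / 2) ^ n ∧ ‖F s.1‖ - γ n < ‖F s.1 s.2‖)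
    (R := fun n s s' => dist s s' ≤ δ / 4 * (1 / 2) ^ n) (a := (Φ, p))
    ⟨by simp, by rwa [hΦ]⟩ ?_).imp fun u ⟨hu₀, hP, hR⟩ => ⟨hu₀, fun n => (hP n).2, hR⟩
  rintro n ⟨Ψ, q⟩ ⟨hΨ, hq⟩
  dsimp only at hΨ hq ⊢
  have hpow : (0 : ℝ) < (1 / 2) ^ n := by positivity
  have hγΨ : γ n ≤ ‖F Ψ‖ := by
    have hFΨ : ‖F Φ‖ - ‖F Ψ‖ ≤ ‖Ψ - Φ‖ :=
      calc ‖F Φ‖ - ‖F Ψ‖ ≤ ‖F (Φ - Ψ)‖ := map_sub F Φ Ψ ▸ norm_sub_norm_le _ _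
        _ ≤ ‖Ψ - Φ‖ := (hF.norm_apply_le _).trans_eq (norm_sub_rev _ _)
    linarith [hγ₁ n, mul_pos hδ hpow]
  obtain ⟨Ψ', q', hΨ', hq', hnear⟩ :=
    hF.exists_near_max_dist_lt hsphere hsym (hϖ n) (hsep n) hγΨ hq (hγ (n + 1)) (hγϖ n)
  refine ⟨(Ψ', q'), ⟨?_, hnear⟩, ?_⟩
  · calc ‖Ψ' - Φ‖ ≤ ‖Ψ' - Ψ‖ + ‖Ψ - Φ‖ := norm_sub_le_norm_sub_add_norm_sub _ _ _
      _ ≤ δ / 2 - δ / 2 * (1 / 2) ^ (n + 1) := by rw [pow_succ]; linarith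
  · rw [Prod.dist_eq, dist_eq_norm, norm_sub_rev]
    exact max_le (by linarith) hq'.le

end IsAdmissible

theorem exists_norm_apply_eq_norm_of_le_geometric {Z K : Type*} [NormedAddCommGroup Z]
    [NormedSpace ℝ Z] [CompleteSpace Z] [PseudoMetricSpace K] [CompleteSpace K]
    (F : Z →L[ℝ] (K →ᵇ W)) {u : ℕ → Z × K} {C : ℝ}
    (hu : ∀ n, dist (u n) (u (n + 1)) ≤ C * (1 / 2) ^ n) {γ : ℕ → ℝ} (hγ : Tendsto γ atTop (𝓝 0))
    (hnear : ∀ n, ‖F (u n).1‖ - γ n ≤ ‖F (u n).1 (u n).2‖) :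
    ∃ v : Z × K, dist (u 0) v ≤ 2 * C ∧ ‖F v.1 v.2‖ = ‖F v.1‖ := by
  obtain ⟨v, hv⟩ := cauchySeq_tendsto_of_complete (cauchySeq_of_le_geometric _ C (by norm_num) hu)
  refine ⟨v, ?_, ?_⟩
  · have := dist_le_of_le_geometric_of_tendsto₀ _ C (by norm_num) hu hv
    norm_num at this
    linarith
  · exact BoundedContinuousFunction.norm_apply_eq_norm_of_tendsto
      ((F.continuous.tendsto v.1).comp ((continuous_fst.tendsto v).comp hv))
      ((continuous_snd.tendsto v).comp hv) hγ hnear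

theorem exists_norm_eq_one_of_norm_apply_eq_norm {Z K : Type*} [NormedAddCommGroup Z]
    [NormedSpace ℝ Z] [TopologicalSpace K] (F : Z →L[ℝ] (K →ᵇ W)) {Φ Ψ' : Z} {q : K}
    (hΦ : ‖F Φ‖ = 1) (hΨ' : F Ψ' ≠ 0) (hq : ‖F Ψ' q‖ = ‖F Ψ'‖) :
    ∃ Ψ : Z, ‖F Ψ‖ = 1 ∧ ‖F Ψ q‖ = 1 ∧ ‖F Ψ - F Φ‖ ≤ 2 * ‖F Ψ' - F Φ‖ := by
  refine ⟨‖F Ψ'‖⁻¹ • Ψ', ?_, ?_, ?_⟩ <;> rw [map_smul]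
  · exact norm_smul_inv_norm hΨ'
  · rw [BoundedContinuousFunction.smul_apply, norm_smul, hq, norm_inv, norm_norm,
      inv_mul_cancel₀ (norm_ne_zero_iff.2 hΨ')]
  · exact norm_inv_norm_smul_sub_le hΦ

theorem exists_norm_eq_one_of_le_geometric {Z K : Type*} [NormedAddCommGroup Z]
    [NormedSpace ℝ Z] [CompleteSpace Z] [PseudoMetricSpace K] [CompleteSpace K]
    {F : Z →L[ℝ] (K →ᵇ W)} (hF : ∀ Φ, ‖F Φ‖ ≤ ‖Φ‖) {u : ℕ → Z × K} {C : ℝ} (hC : C < 1 / 2)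
    (hu : ∀ n, dist (u n) (u (n + 1)) ≤ C * (1 / 2) ^ n) {γ : ℕ → ℝ} (hγ : Tendsto γ atTop (𝓝 0))
    (hnear : ∀ n, ‖F (u n).1‖ - γ n ≤ ‖F (u n).1 (u n).2‖) (hu₀ : ‖F (u 0).1‖ = 1) :
    ∃ Ψ : Z, ‖F Ψ‖ = 1 ∧ ∃ q : K, ‖F Ψ q‖ = 1 ∧ dist (u 0).2 q ≤ 2 * C ∧
      ‖F Ψ - F (u 0).1‖ ≤ 4 * C := by
  obtain ⟨⟨Ψ', q⟩, hdist, hattain⟩ := exists_norm_apply_eq_norm_of_le_geometric F hu hγ hnear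
  rw [Prod.dist_eq, dist_eq_norm, norm_sub_rev] at hdist
  have hΨ' : ‖F Ψ' - F (u 0).1‖ ≤ 2 * C := by
    rw [← map_sub]
    exact (hF _).trans ((le_max_left _ _).trans hdist)
  have hΨ'0 : F Ψ' ≠ 0 := by
    intro h
    rw [h, zero_sub, norm_neg, hu₀] at hΨ'
    linarith
  obtain ⟨Ψ, hΨ, hΨq, hΨΦ⟩ := exists_norm_eq_one_of_norm_apply_eq_norm F hu₀ hΨ'0 hattain
  exact ⟨Ψ, hΨ, q, hΨq, (le_max_right _ _).trans hdist, by linarith⟩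

theorem IsAdmissible.bishopPhelpsBollobas {L : Set (X × (Y →L[ℝ] ℝ))} [CompleteSpace L]
    {Z : Type*} [NormedAddCommGroup Z] [NormedSpace ℝ Z] [CompleteSpace Z]
    {F : Z →L[ℝ] (L →ᵇ W)} (hF : IsAdmissible F) (hsphere : ∀ p ∈ L, ‖p.1‖ = 1 ∧ ‖p.2‖ = 1)
    (hsym : ∀ p ∈ L, -p ∈ L) (hP : PropP L) {ε : ℝ} (hε : 0 < ε) :
    ∃ η > (0 : ℝ), ∀ Φ : Z, ‖F Φ‖ = 1 → ∀ p : L, 1 - η < ‖F Φ p‖ →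
      ∃ Ψ : Z, ‖F Ψ‖ = 1 ∧ ∃ q : L, ‖F Ψ q‖ = 1 ∧
        ‖p.1.1 - q.1.1‖ + ‖p.1.2 - q.1.2‖ < ε ∧ ‖F Ψ - F Φ‖ < ε := by
  obtain ⟨ε₀, hε₀, hsepP⟩ := hP.exists_uniformlySeparated
  set δ := min (ε / 2) (min ε₀ 1)
  have hδ : 0 < δ := lt_min (half_pos hε) (lt_min hε₀ one_pos)
  have hδε : δ < ε := (min_le_left _ _).trans_lt (half_lt_self hε)
  have hδε₀ : δ ≤ ε₀ := (min_le_right _ _).trans (min_le_left _ _)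
  have hδ₁ : δ ≤ 1 := (min_le_right _ _).trans (min_le_right _ _)
  have hpow : ∀ n : ℕ, 0 < (1 / 2 : ℝ) ^ n ∧ (1 / 2 : ℝ) ^ n ≤ 1 :=
    fun n => ⟨by positivity, pow_le_one₀ (by norm_num) (by norm_num)⟩
  choose ϖ hϖ hϖ₁ hsep using fun n : ℕ =>
    hsepP (δ / 4 * (1 / 2) ^ n) (by positivity) (by nlinarith [hpow n])
  obtain ⟨γ, hγ, hγle, hγϖ⟩ := exists_pos_add_succ_le
    (a := fun n => δ / 8 * (1 / 2) ^ n * (ϖ n / 2)) fun n => by have := hϖ n; positivity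
  have hγgeom : ∀ n, γ n ≤ δ / 32 * (1 / 2) ^ n := fun n => by
    have := mul_le_mul_of_nonneg_left (hϖ₁ n) (mul_pos hδ (hpow n).1).le
    linarith [hγle n]
  have hγ₁ : ∀ n, γ n ≤ 1 / 2 := fun n => by nlinarith [hγgeom n, hpow n]
  have hγlim : Tendsto γ atTop (𝓝 0) := squeeze_zero (fun n => (hγ n).le) hγgeom <| by
    simpa using (tendsto_pow_atTop_nhds_zero_of_lt_one (by norm_num : (0 : ℝ) ≤ 1 / 2)
      (by norm_num)).const_mul (δ / 32)
  refine ⟨γ 0, hγ 0, fun Φ hΦ p hp => ?_⟩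
  obtain ⟨u, hu₀, hnear, hdist⟩ :=
    hF.exists_seq_near_max hsphere hsym hδ hδ₁ hϖ hsep hγ hγ₁ hγϖ hΦ hp
  obtain ⟨Ψ, hΨ, q, hΨq, hpq, hΨΦ⟩ := exists_norm_eq_one_of_le_geometric hF.norm_apply_le
    (by linarith) hdist hγlim (fun n => (hnear n).le) (by rwa [hu₀])
  rw [hu₀] at hpq hΨΦ
  refine ⟨Ψ, hΨ, q, hΨq, ?_, by linarith⟩
  calc ‖p.1.1 - q.1.1‖ + ‖p.1.2 - q.1.2‖ ≤ 2 * dist p q :=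
        Prod.norm_sub_add_norm_sub_le_two_mul_dist (p : X × (Y →L[ℝ] ℝ)) q
    _ < ε := by linarith

def IsCbe.toBCF {L : Set (X × (Y →L[ℝ] ℝ))} {Φ : X × (Y →L[ℝ] ℝ) → W} (h : IsCbe L Φ) :
    L →ᵇ W :=
  .ofNormedAddCommGroup (L.domRestrict Φ) h.1.domRestrict (supNormOn L Φ) fun q =>
    le_csSup h.2.1 ⟨q, q.2, rfl⟩

set_option linter.unusedSectionVars false in
theorem IsCbe.norm_toBCF {L : Set (X × (Y →L[ℝ] ℝ))} {Φ : X × (Y →L[ℝ] ℝ) → W}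
    (h : IsCbe L Φ) : ‖h.toBCF‖ = supNormOn L Φ := by
  rw [BoundedContinuousFunction.norm_eq_iSup_norm, supNormOn, sSup_image']
  rfl

section Restrict

variable {L : Set (X × (Y →L[ℝ] ℝ))} {Z : Type*} [NormedAddCommGroup Z] [NormedSpace ℝ Z]
  {j : Z →ₗ[ℝ] (X × (Y →L[ℝ] ℝ)) → W}

def restrictCLM (hmem : ∀ Φ, IsCbe L (j Φ)) (hnorm : ∀ Φ, supNormOn L (j Φ) ≤ ‖Φ‖) :
    Z →L[ℝ] (L →ᵇ W) :=
  LinearMap.mkContinuous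
    { toFun := fun Φ => (hmem Φ).toBCF
      map_add' := fun Φ Ψ => by ext q; simp [IsCbe.toBCF]; rfl
      map_smul' := fun c Φ => by ext q; simp [IsCbe.toBCF]; rfl }
    1 fun Φ => by rw [one_mul]; exact ((hmem Φ).norm_toBCF).trans_le (hnorm Φ)

theorem norm_restrictCLM (hmem : ∀ Φ, IsCbe L (j Φ)) (hnorm : ∀ Φ, supNormOn L (j Φ) ≤ ‖Φ‖)
    (Φ : Z) : ‖restrictCLM hmem hnorm Φ‖ = supNormOn L (j Φ) :=
  (hmem Φ).norm_toBCF

theorem isAdmissible_restrictCLM (hmem : ∀ Φ, IsCbe L (j Φ))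
    (hnorm : ∀ Φ, supNormOn L (j Φ) ≤ ‖Φ‖)
    (hcontains : ∀ T : X →L[ℝ] Y, FinRank T → ∀ w : W,
      ∃ Φ : Z, (∀ p ∈ L, j Φ p = (p.2 (T p.1)) • w) ∧ ‖Φ‖ ≤ ‖T‖ * ‖w‖) :
    IsAdmissible (restrictCLM hmem hnorm) where
  norm_apply_le Φ := (norm_restrictCLM hmem hnorm Φ).trans_le (hnorm Φ)
  apply_neg Φ q _ := (hmem Φ).2.2 q q.2
  exists_eq_finRank T hT w := (hcontains T hT w).imp fun _ hΘ => ⟨fun q => hΘ.1 q q.2, hΘ.2⟩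

end Restrict

theorem statement1_general
    [CompleteSpace X]
    (L : Set (X × (Y →L[ℝ] ℝ)))
    (hLsphere : ∀ p ∈ L, ‖p.1‖ = 1 ∧ ‖p.2‖ = 1)
    (hLsym : ∀ p ∈ L, -p ∈ L) (hLclosed : IsClosed L)
    (hP : PropP L)
    {Z : Type*} [NormedAddCommGroup Z] [NormedSpace ℝ Z] [CompleteSpace Z]
    (j : Z →ₗ[ℝ] (X × (Y →L[ℝ] ℝ)) → W)
    (hjmem : ∀ Φ : Z, IsCbe L (j Φ))
    (hjnorm : ∀ Φ : Z, supNormOn L (j Φ) ≤ ‖Φ‖)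
    (hjcontains : ∀ T : X →L[ℝ] Y, FinRank T → ∀ w : W,
      ∃ Φ : Z, (∀ p ∈ L, j Φ p = (p.2 (T p.1)) • w) ∧ ‖Φ‖ ≤ ‖T‖ * ‖w‖) :
    ∀ ε : ℝ, 0 < ε → ∃ η > (0 : ℝ), ∀ Φ : Z, supNormOn L (j Φ) = 1 →
      ∀ p ∈ L, 1 - η < ‖j Φ p‖ →
        ∃ Ψ : Z, supNormOn L (j Ψ) = 1 ∧ ∃ q ∈ L, ‖j Ψ q‖ = 1 ∧
          ‖p.1 - q.1‖ + ‖p.2 - q.2‖ < ε ∧ supNormOn L (j (Ψ - Φ)) < ε := by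
  have : CompleteSpace L := hLclosed.isComplete.completeSpace_coe
  have hF := isAdmissible_restrictCLM hjmem hjnorm hjcontains
  intro ε hε
  obtain ⟨η, hη, hbpb⟩ := hF.bishopPhelpsBollobas hLsphere hLsym hP hε
  refine ⟨η, hη, fun Φ hΦ p hp hnear => ?_⟩
  rw [← norm_restrictCLM hjmem hjnorm] at hΦ
  obtain ⟨Ψ, hΨ, q, hq, hpq, hΨΦ⟩ := hbpb Φ hΦ ⟨p, hp⟩ hnear
  refine ⟨Ψ, by rwa [← norm_restrictCLM hjmem hjnorm], q, q.2, hq, hpq, ?_⟩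
  rwa [← norm_restrictCLM hjmem hjnorm, map_sub]

theorem statement1
    [CompleteSpace X] [CompleteSpace Y] [CompleteSpace W]
    (L : Set (X × (Y →L[ℝ] ℝ))) (hLne : L.Nonempty)
    (hLsphere : ∀ p ∈ L, ‖p.1‖ = 1 ∧ ‖p.2‖ = 1)
    (hLsym : ∀ p ∈ L, -p ∈ L) (hLclosed : IsClosed L)
    (hP : PropP L)
    {Z : Type*} [NormedAddCommGroup Z] [NormedSpace ℝ Z] [CompleteSpace Z]
    (j : Z →ₗ[ℝ] (X × (Y →L[ℝ] ℝ)) → W)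
    (hjinj : Function.Injective j)
    (hjmem : ∀ Φ : Z, IsCbe L (j Φ))
    (hjnorm : ∀ Φ : Z, supNormOn L (j Φ) ≤ ‖Φ‖)
    (hjcontains : ∀ T : X →L[ℝ] Y, FinRank T → ∀ w : W,
      ∃ Φ : Z, (∀ p ∈ L, j Φ p = (p.2 (T p.1)) • w) ∧ ‖Φ‖ ≤ ‖T‖ * ‖w‖) :
    ∀ ε : ℝ, 0 < ε → ∃ η > (0 : ℝ), ∀ Φ : Z, supNormOn L (j Φ) = 1 →
      ∀ p ∈ L, 1 - η < ‖j Φ p‖ →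
        ∃ Ψ : Z, supNormOn L (j Ψ) = 1 ∧ ∃ q ∈ L, ‖j Ψ q‖ = 1 ∧
          ‖p.1 - q.1‖ + ‖p.2 - q.2‖ < ε ∧ supNormOn L (j (Ψ - Φ)) < ε :=
  statement1_general L hLsphere hLsym hLclosed hP j hjmem hjnorm hjcontains

end
end

section
/- Let X be a uniformly convex real Banach space, let Y be a real Banach space whose dual Y* is uniformly convex (equivalently, Y is uniformly smooth), and let θ : S_X × S_{Y*} → ℝ be a nonzero function which is uniformly continuous, satisfies θ(−x,y*) = θ(x,−y*) = −θ(x,y*) for all (x,y*) ∈ S_X × S_{Y*}, and for which Π_θ(X,Y) := {(x,y*) ∈ S_X × S_{Y*} : θ(x,y*) = 1} is nonempty. Let W be any real Banach space and let (Z, ‖·‖_Z) be a Banach space which is a linear subspace of C_{b,e}(Π_θ(X,Y), W) such that (i) ‖Φ‖_Z ≥ ‖Φ‖_∞ for all Φ ∈ Z, and (ii) Z contains every map [T]⊕w : (x,y*) ↦ y*(T(x))·w with T : X → Y finite-rank bounded linear and w ∈ W, with ‖[T]⊕w‖_Z ≤ ‖T‖·‖w‖. Then the following numerical-radius Bishop–Phelps–Bollobás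 property holds: for every ε > 0 there exists η(ε) > 0 such that whenever Φ ∈ Z with v_θ(Φ) = 1 and (x,y*) ∈ Π_θ(X,Y) satisfy ‖Φ(x,y*)‖ > 1 − η(ε), there exist Ψ ∈ Z with v_θ(Ψ) = 1 and (z,t*) ∈ Π_θ(X,Y) such that ‖Ψ(z,t*)‖ = 1, ‖z−x‖ + ‖t*−y*‖ < ε and v_θ(Ψ−Φ) < ε. -/
open Filter Topology Set

noncomputable section

variable {X Y W : Type*}
  [NormedAddCommGroup X] [NormedSpace ℝ X]
  [NormedAddCommGroup Y] [NormedSpace ℝ Y]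
  [NormedAddCommGroup W] [NormedSpace ℝ W]

/-- `Π_θ(X,Y) = {(x,y*) ∈ S_X × S_{Y*} : θ(x,y*) = 1}`. -/
def PiTheta (θ : X × (Y →L[ℝ] ℝ) → ℝ) : Set (X × (Y →L[ℝ] ℝ)) :=
  {p | ‖p.1‖ = 1 ∧ ‖p.2‖ = 1 ∧ θ p = 1}

-- ### auxiliary lemmas

lemma bpb_uc {E : Type*} [NormedAddCommGroup E] [NormedSpace ℝ E] [UniformConvexSpace E]
    {ε : ℝ} (hε : 0 < ε) : ∃ δ > (0:ℝ), ∀ x y : E, ‖x‖ ≤ 1 → ‖y‖ ≤ 1 →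
      2 - δ < ‖x + y‖ → ‖x - y‖ < ε := by
  obtain ⟨δ, hδ, h⟩ := exists_forall_closed_ball_dist_add_le_two_sub E hε
  refine ⟨δ, hδ, fun x y hx hy hxy => ?_⟩
  by_contra hc
  push_neg at hc
  exact absurd (h hx hy hc) (by linarith)

lemma bpb_dual {E : Type*} [NormedAddCommGroup E] [NormedSpace ℝ E] [CompleteSpace E]
    (x : E) (hx : ‖x‖ = 1) : ∃ g : E →L[ℝ] ℝ, ‖g‖ = 1 ∧ g x = 1 := by
  obtain ⟨g, hg, hgx⟩ := exists_dual_vector ℝ x (by rw [← norm_ne_zero_iff, hx]; norm_num)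
  exact ⟨g, hg, by simp only [hgx, hx]; norm_num⟩

lemma bpb_near {F : Type*} [NormedAddCommGroup F] [NormedSpace ℝ F]
    (f : F →L[ℝ] ℝ) (hf : ‖f‖ = 1) {c : ℝ} (hc : c < 1) :
    ∃ y : F, ‖y‖ ≤ 1 ∧ c < f y := by
  obtain ⟨y, hy, hfy⟩ := f.exists_lt_apply_of_lt_opNorm (r := c) (by rw [hf]; exact hc)
  rcases le_or_gt (f y) 0 with h | h
  · refine ⟨-y, by simpa using hy.le, ?_⟩
    have h2 : |f y| = -(f y) := abs_of_nonpos h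
    simp only [Real.norm_eq_abs] at hfy
    simpa [h2] using hfy
  · refine ⟨y, hy.le, ?_⟩
    simp only [Real.norm_eq_abs, abs_of_pos h] at hfy
    exact hfy

lemma bpb_rec {A : Type*} (Inv : ℕ → A → Prop) (Rel : ℕ → A → A → Prop) (a0 : A)
    (h0 : Inv 0 a0) (step : ∀ k a, Inv k a → ∃ b, Inv (k+1) b ∧ Rel k a b) :
    ∃ u : ℕ → A, u 0 = a0 ∧ (∀ k, Inv k (u k)) ∧ ∀ k, Rel k (u k) (u (k+1)) := by
  choose f hf1 hf2 using step
  let F : ∀ _ : ℕ, {a // Inv _ a} := fun k =>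
    Nat.rec (motive := fun k => {a // Inv k a}) ⟨a0, h0⟩
      (fun k ih => ⟨f k ih.1 ih.2, hf1 k ih.1 ih.2⟩) k
  exact ⟨fun k => (F k).1, rfl, fun k => (F k).2, fun k => hf2 k (F k).1 (F k).2⟩

section withZ

variable {Z : Type*} [NormedAddCommGroup Z] [NormedSpace ℝ Z]

/-- invariant of the iteration -/
def BPBInv (θ : X × (Y →L[ℝ] ℝ) → ℝ) (j : Z →ₗ[ℝ] (X × (Y →L[ℝ] ℝ)) → W) (Φ : Z)
    (p : X × (Y →L[ℝ] ℝ)) (γ S : ℕ → ℝ) (k : ℕ) (s : Z × (X × (Y →L[ℝ] ℝ))) : Prop :=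
  s.2 ∈ PiTheta θ ∧
  supNormOn (PiTheta θ) (j s.1) - γ k < ‖j s.1 s.2‖ ∧
  1 - S k ≤ supNormOn (PiTheta θ) (j s.1) ∧
  ‖s.1 - Φ‖ ≤ S k ∧
  ‖s.2.1 - p.1‖ + ‖s.2.2 - p.2‖ ≤ S k

def BPBRel (bb : ℕ → ℝ) (k : ℕ) (s t : Z × (X × (Y →L[ℝ] ℝ))) : Prop :=
  ‖t.1 - s.1‖ ≤ bb k ∧ ‖t.2.1 - s.2.1‖ + ‖t.2.2 - s.2.2‖ ≤ bb k

end withZ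

set_option maxHeartbeats 2000000

theorem statement3
    [CompleteSpace X] [CompleteSpace Y] [CompleteSpace W]
    [UniformConvexSpace X] [UniformConvexSpace (Y →L[ℝ] ℝ)]
    (θ : X × (Y →L[ℝ] ℝ) → ℝ)
    (hθnz : ∃ p : X × (Y →L[ℝ] ℝ), ‖p.1‖ = 1 ∧ ‖p.2‖ = 1 ∧ θ p ≠ 0)
    (hθuc : ∀ r : ℝ, 0 < r → ∃ α > (0 : ℝ), ∀ p q : X × (Y →L[ℝ] ℝ),
      ‖p.1‖ = 1 → ‖p.2‖ = 1 → ‖q.1‖ = 1 → ‖q.2‖ = 1 →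
      ‖p.1 - q.1‖ + ‖p.2 - q.2‖ < α → |θ p - θ q| < r)
    (hθodd : ∀ p : X × (Y →L[ℝ] ℝ), ‖p.1‖ = 1 → ‖p.2‖ = 1 →
      θ (-p.1, p.2) = -θ p ∧ θ (p.1, -p.2) = -θ p)
    (hPine : (PiTheta θ).Nonempty)
    {Z : Type*} [NormedAddCommGroup Z] [NormedSpace ℝ Z] [CompleteSpace Z]
    (j : Z →ₗ[ℝ] (X × (Y →L[ℝ] ℝ)) → W)
    (hjinj : Function.Injective j)
    (hjmem : ∀ Φ : Z, IsCbe (PiTheta θ) (j Φ))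
    (hjnorm : ∀ Φ : Z, supNormOn (PiTheta θ) (j Φ) ≤ ‖Φ‖)
    (hjcontains : ∀ T : X →L[ℝ] Y, FinRank T → ∀ w : W,
      ∃ Φ : Z, (∀ p ∈ PiTheta θ, j Φ p = (p.2 (T p.1)) • w) ∧ ‖Φ‖ ≤ ‖T‖ * ‖w‖) :
    ∀ ε : ℝ, 0 < ε → ∃ η > (0 : ℝ), ∀ Φ : Z, supNormOn (PiTheta θ) (j Φ) = 1 →
      ∀ p ∈ PiTheta θ, 1 - η < ‖j Φ p‖ →
        ∃ Ψ : Z, supNormOn (PiTheta θ) (j Ψ) = 1 ∧ ∃ q ∈ PiTheta θ, ‖j Ψ q‖ = 1 ∧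
          ‖q.1 - p.1‖ + ‖q.2 - p.2‖ < ε ∧ supNormOn (PiTheta θ) (j (Ψ - Φ)) < ε := by
  classical
  intro ε hε
  -- basic sup facts
  have hne : ∀ A : Z, ((fun q => ‖j A q‖) '' PiTheta θ).Nonempty := fun A => hPine.image _
  have hevalle : ∀ (A : Z), ∀ q ∈ PiTheta θ, ‖j A q‖ ≤ supNormOn (PiTheta θ) (j A) :=
    fun A q hq => le_csSup (hjmem A).2.1 ⟨q, hq, rfl⟩
  have hsuple : ∀ (A : Z) (c : ℝ), (∀ q ∈ PiTheta θ, ‖j A q‖ ≤ c) →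
      supNormOn (PiTheta θ) (j A) ≤ c := by
    intro A c h
    exact csSup_le (hne A) (by rintro x ⟨q, hq, rfl⟩; exact h q hq)
  have hexlt : ∀ (A : Z) (c : ℝ), c < supNormOn (PiTheta θ) (j A) →
      ∃ q ∈ PiTheta θ, c < ‖j A q‖ := by
    intro A c h
    obtain ⟨x, ⟨q, hq, rfl⟩, hx⟩ := exists_lt_of_lt_csSup (hne A) h
    exact ⟨q, hq, hx⟩
  have hsubeval : ∀ (A B : Z) (q : X × (Y →L[ℝ] ℝ)), j A q - j B q = j (A - B) q := by
    intro A B q; rw [map_sub]; rfl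
  have hlip : ∀ A B : Z, supNormOn (PiTheta θ) (j A) ≤ supNormOn (PiTheta θ) (j B) + ‖A - B‖ := by
    intro A B
    apply hsuple
    intro q hq
    have h1 : ‖j A q‖ ≤ ‖j B q‖ + ‖j (A - B) q‖ := by
      rw [← hsubeval A B q]
      have he : j A q = j B q + (j A q - j B q) := by abel
      calc ‖j A q‖ = ‖j B q + (j A q - j B q)‖ := by rw [← he]
      _ ≤ ‖j B q‖ + ‖j A q - j B q‖ := norm_add_le _ _
    have h2 : ‖j (A - B) q‖ ≤ ‖A - B‖ := (hevalle _ q hq).trans (hjnorm _)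
    have h3 := hevalle B q hq
    linarith
  -- symmetry of PiTheta
  have hLsymm : ∀ q ∈ PiTheta θ, -q ∈ PiTheta θ := by
    rintro q ⟨h1, h2, h3⟩
    have e1 := (hθodd (q.1, -q.2) (by simpa using h1) (by simpa using h2)).1
    have e2 := (hθodd q h1 h2).2
    refine ⟨by simpa using h1, by simpa using h2, ?_⟩
    have hq : -q = (-q.1, -q.2) := rfl
    rw [hq]
    simp only at e1
    rw [e1, e2, h3]
    norm_num
  -- key uniform-convexity peak lemma
  obtain ⟨α₂, hα₂pos, hα₂⟩ := hθuc 2 (by norm_num)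
  have key : ∀ d : ℝ, ∃ ϖ : ℝ, 0 < ϖ ∧ ϖ ≤ 1/4 ∧ (0 < d → d ≤ α₂ → ∀ p' ∈ PiTheta θ,
      ∃ (xs : X →L[ℝ] ℝ) (ye : Y), ‖xs‖ ≤ 1 ∧ ‖ye‖ ≤ 1 ∧
        1 - ϖ ≤ xs p'.1 * p'.2 ye ∧
        ∀ q ∈ PiTheta θ, d ≤ ‖p'.1 - q.1‖ + ‖p'.2 - q.2‖ →
          d ≤ ‖p'.1 + q.1‖ + ‖p'.2 + q.2‖ → |xs q.1 * q.2 ye| ≤ 1 - 2*ϖ) := by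
    intro d
    rcases le_or_gt d 0 with hd | hd
    · exact ⟨1/8, by norm_num, by norm_num, fun h => absurd h (not_lt.2 hd)⟩
    obtain ⟨δX, hδX, hXuc⟩ := bpb_uc (E := X) (half_pos hd)
    obtain ⟨δY, hδY, hYuc⟩ := bpb_uc (E := Y →L[ℝ] ℝ) (half_pos hd)
    refine ⟨min (min (δX/4) (δY/4)) (1/4), by positivity, min_le_right _ _, ?_⟩
    set ϖ := min (min (δX/4) (δY/4)) (1/4) with hϖdef
    have hϖX : ϖ ≤ δX/4 := le_trans (min_le_left _ _) (min_le_left _ _)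
    have hϖY : ϖ ≤ δY/4 := le_trans (min_le_left _ _) (min_le_right _ _)
    have hϖ4 : ϖ ≤ 1/4 := min_le_right _ _
    have hϖ0 : 0 < ϖ := by positivity
    intro _ hdα p' hp'
    obtain ⟨hp1, hp2, hpθ⟩ := hp'
    obtain ⟨xs, hxs, hxsp⟩ := bpb_dual p'.1 hp1
    obtain ⟨ye, hye, hyep⟩ := bpb_near p'.2 hp2 (c := 1 - ϖ) (by linarith)
    have hyep1 : p'.2 ye ≤ 1 := by
      have := (p'.2).le_opNorm ye
      rw [hp2, one_mul, Real.norm_eq_abs] at this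
      have := le_abs_self (p'.2 ye)
      linarith
    refine ⟨xs, ye, hxs.le, hye, by rw [hxsp]; linarith, ?_⟩
    intro q hq hd1 hd2
    obtain ⟨hq1, hq2, hqθ⟩ := hq
    by_contra hcon
    push_neg at hcon
    have haq : |xs q.1| ≤ 1 := by
      have h := xs.le_opNorm q.1
      rw [hxs, hq1, one_mul, Real.norm_eq_abs] at h
      exact h
    have hbq : |q.2 ye| ≤ 1 := by
      have h := (q.2).le_opNorm ye
      rw [hq2, one_mul, Real.norm_eq_abs] at h
      exact h.trans hye
    rw [abs_mul] at hcon
    have ha : 1 - 2*ϖ < |xs q.1| := by nlinarith [abs_nonneg (xs q.1), abs_nonneg (q.2 ye)]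
    have hb : 1 - 2*ϖ < |q.2 ye| := by nlinarith [abs_nonneg (xs q.1), abs_nonneg (q.2 ye)]
    -- uniform convexity subclaims
    have hXc : ∀ u : X, ‖u‖ = 1 → 1 - 2*ϖ < xs u → ‖p'.1 - u‖ < d/2 := by
      intro u hu hxu
      apply hXuc p'.1 u (le_of_eq hp1) (le_of_eq hu)
      have h2 : xs p'.1 + xs u ≤ ‖p'.1 + u‖ := by
        have hh : xs (p'.1 + u) ≤ ‖p'.1 + u‖ := by
          calc xs (p'.1 + u) ≤ |xs (p'.1 + u)| := le_abs_self _
          _ ≤ ‖xs‖ * ‖p'.1 + u‖ := by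
              have := xs.le_opNorm (p'.1 + u); rwa [Real.norm_eq_abs] at this
          _ = ‖p'.1 + u‖ := by rw [hxs, one_mul]
        rwa [map_add] at hh
      rw [hxsp] at h2
      linarith
    have hYc : ∀ g : Y →L[ℝ] ℝ, ‖g‖ = 1 → 1 - 2*ϖ < g ye → ‖p'.2 - g‖ < d/2 := by
      intro g hg hgye
      apply hYuc p'.2 g (le_of_eq hp2) (le_of_eq hg)
      have h2 : p'.2 ye + g ye ≤ ‖p'.2 + g‖ := by
        calc p'.2 ye + g ye = (p'.2 + g) ye := by simp
        _ ≤ |(p'.2 + g) ye| := le_abs_self _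
        _ ≤ ‖p'.2 + g‖ * ‖ye‖ := by
            have := (p'.2 + g).le_opNorm ye; rwa [Real.norm_eq_abs] at this
        _ ≤ ‖p'.2 + g‖ := by
            nlinarith [norm_nonneg (p'.2 + g)]
      linarith
    -- mixed-sign contradiction via θ
    have hmix : ∀ m : X × (Y →L[ℝ] ℝ), ‖m.1‖ = 1 → ‖m.2‖ = 1 → θ m = -1 →
        ‖p'.1 - m.1‖ + ‖p'.2 - m.2‖ < d → False := by
      intro m hm1 hm2 hmθ hdist
      have h := hα₂ p' m hp1 hp2 hm1 hm2 (lt_of_lt_of_le hdist hdα)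
      rw [hpθ, hmθ] at h
      norm_num at h
    have hoddq1 : θ (-q.1, q.2) = -1 := by rw [(hθodd q hq1 hq2).1, hqθ]
    have hoddq2 : θ (q.1, -q.2) = -1 := by rw [(hθodd q hq1 hq2).2, hqθ]
    rcases le_or_gt (xs q.1) 0 with hA | hA <;> rcases le_or_gt (q.2 ye) 0 with hB | hB
    · -- both nonpositive
      have h1 : ‖p'.1 + q.1‖ < d/2 := by
        have h := hXc (-q.1) (by rw [norm_neg, hq1])
          (by rw [map_neg]; rw [abs_of_nonpos hA] at ha; linarith)
        rwa [sub_neg_eq_add] at h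
      have h2 : ‖p'.2 + q.2‖ < d/2 := by
        have h := hYc (-q.2) (by rw [norm_neg, hq2])
          (by rw [ContinuousLinearMap.neg_apply]; rw [abs_of_nonpos hB] at hb; linarith)
        rwa [sub_neg_eq_add] at h
      linarith
    · -- xs q.1 ≤ 0 < q.2 ye : mixed
      have h1 : ‖p'.1 + q.1‖ < d/2 := by
        have h := hXc (-q.1) (by rw [norm_neg, hq1])
          (by rw [map_neg]; rw [abs_of_nonpos hA] at ha; linarith)
        rwa [sub_neg_eq_add] at h
      have h2 : ‖p'.2 - q.2‖ < d/2 := hYc q.2 hq2 (by rw [abs_of_pos hB] at hb; linarith)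
      refine hmix (-q.1, q.2) (by simpa using hq1) hq2 hoddq1 ?_
      show ‖p'.1 - -q.1‖ + ‖p'.2 - q.2‖ < d
      rw [sub_neg_eq_add]
      linarith
    · -- q.2 ye ≤ 0 < xs q.1 : mixed
      have h1 : ‖p'.1 - q.1‖ < d/2 := hXc q.1 hq1 (by rw [abs_of_pos hA] at ha; linarith)
      have h2 : ‖p'.2 + q.2‖ < d/2 := by
        have h := hYc (-q.2) (by rw [norm_neg, hq2])
          (by rw [ContinuousLinearMap.neg_apply]; rw [abs_of_nonpos hB] at hb; linarith)
        rwa [sub_neg_eq_add] at h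
      refine hmix (q.1, -q.2) hq1 (by simpa using hq2) hoddq2 ?_
      show ‖p'.1 - q.1‖ + ‖p'.2 - -q.2‖ < d
      rw [sub_neg_eq_add]
      linarith
    · -- both positive
      have h1 : ‖p'.1 - q.1‖ < d/2 := hXc q.1 hq1 (by rw [abs_of_pos hA] at ha; linarith)
      have h2 : ‖p'.2 - q.2‖ < d/2 := hYc q.2 hq2 (by rw [abs_of_pos hB] at hb; linarith)
      linarith
  -- constants
  choose ϖf hϖfpos hϖfle hϖfmain using key
  set e : ℝ := min (min ε 1) α₂ / 4 with hedef
  have hεmin : 0 < min (min ε 1) α₂ := lt_min (lt_min hε one_pos) hα₂pos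
  have hepos : 0 < e := by rw [hedef]; positivity
  have heε : 4 * e ≤ ε := by
    have h1 : min (min ε 1) α₂ ≤ ε := le_trans (min_le_left _ _) (min_le_left _ _)
    rw [hedef]; linarith
  have he1 : e ≤ 1 / 4 := by
    have h1 : min (min ε 1) α₂ ≤ 1 := le_trans (min_le_left _ _) (min_le_right _ _)
    rw [hedef]; linarith
  have heα : e ≤ α₂ := by
    have h1 : min (min ε 1) α₂ ≤ α₂ := min_le_right _ _
    rw [hedef]; linarith
  set bb : ℕ → ℝ := fun k => e * (1/2 : ℝ)^(k+1) with hbbdef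
  have hbbpos : ∀ k, 0 < bb k := fun k => by rw [hbbdef]; positivity
  have hpowle1 : ∀ k : ℕ, ((1:ℝ)/2)^(k+1) ≤ 1 := fun k =>
    pow_le_one₀ (by norm_num) (by norm_num)
  have hbble : ∀ k, bb k ≤ e := by
    intro k
    rw [hbbdef]
    have := hpowle1 k
    nlinarith
  have hbbα : ∀ k, bb k ≤ α₂ := fun k => (hbble k).trans heα
  have hbbmono : ∀ k, bb (k+1) ≤ bb k := by
    intro k
    rw [hbbdef]
    have h : ((1:ℝ)/2)^(k+1+1) ≤ ((1:ℝ)/2)^(k+1) :=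
      pow_le_pow_of_le_one (by norm_num) (by norm_num) (by omega)
    nlinarith
  set ϖm : ℕ → ℝ := fun k => Nat.rec (ϖf (bb 0)) (fun k ih => min ih (ϖf (bb (k+1)))) k
    with hϖmdef
  have hϖmsucc : ∀ k, ϖm (k+1) = min (ϖm k) (ϖf (bb (k+1))) := fun k => rfl
  have hϖmpos : ∀ k, 0 < ϖm k := by
    intro k
    induction k with
    | zero => exact hϖfpos _
    | succ n ih => rw [hϖmsucc]; exact lt_min ih (hϖfpos _)
  have hϖmle : ∀ k, ϖm k ≤ ϖf (bb k) := by
    intro k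
    cases k with
    | zero => exact le_refl _
    | succ n => rw [hϖmsucc]; exact min_le_right _ _
  have hϖmmono : ∀ k, ϖm (k+1) ≤ ϖm k := by
    intro k; rw [hϖmsucc]; exact min_le_left _ _
  have hϖm4 : ∀ k, ϖm k ≤ 1/4 := fun k => (hϖmle k).trans (hϖfle _)
  set γ : ℕ → ℝ := fun k => bb k * ϖm k / 4 with hγdef
  have hγpos : ∀ k, 0 < γ k := fun k => by
    rw [hγdef]; have := hbbpos k; have := hϖmpos k; positivity
  have hγbb : ∀ k, γ k ≤ bb k := by
    intro k
    rw [hγdef]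
    have h1 := hϖm4 k
    have h2 := hbbpos k
    nlinarith
  have hγsum : ∀ k, γ k + γ (k+1) ≤ bb k * ϖf (bb k) / 2 := by
    intro k
    have h1 : γ k ≤ bb k * ϖf (bb k) / 4 := by
      rw [hγdef]
      have := hϖmle k
      have := hbbpos k
      nlinarith
    have h2 : γ (k+1) ≤ bb k * ϖf (bb k) / 4 := by
      rw [hγdef]
      have e1 : ϖm (k+1) ≤ ϖf (bb k) := (hϖmmono k).trans (hϖmle k)
      have e2 := hbbmono k
      have e3 := hbbpos (k+1)
      have e4 := hbbpos k
      have e5 := hϖmpos (k+1)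
      nlinarith
    linarith
  set S : ℕ → ℝ := fun k => e * (1 - (1/2 : ℝ)^k) with hSdef
  have hS0 : S 0 = 0 := by rw [hSdef]; norm_num
  have hSsucc : ∀ k, S (k+1) = S k + bb k := by
    intro k
    rw [hSdef, hbbdef]
    simp only [pow_succ]
    ring
  have hSle : ∀ k, S k ≤ e := by
    intro k
    rw [hSdef]
    have : (0:ℝ) ≤ (1/2 : ℝ)^k := by positivity
    nlinarith
  have hSnonneg : ∀ k, 0 ≤ S k := by
    intro k
    rw [hSdef]
    have := hpowle1 k
    have h2 : ((1:ℝ)/2)^k ≤ 1 := pow_le_one₀ (by norm_num) (by norm_num)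
    nlinarith
  -- main construction
  refine ⟨γ 0, hγpos 0, ?_⟩
  intro Φ hΦ1 p hp hΦp
  have step : ∀ (k : ℕ) (s : Z × (X × (Y →L[ℝ] ℝ))), BPBInv θ j Φ p γ S k s →
      ∃ t, BPBInv θ j Φ p γ S (k+1) t ∧ BPBRel bb k s t := by
    rintro k ⟨Φk, pk⟩ ⟨hpkL, hval, hslb, hZcum, hpcum⟩
    simp only at hpkL hval hslb hZcum hpcum
    have hSk := hSle k
    have hγk := hγbb k
    have hγke : γ k ≤ e := (hγbb k).trans (hbble k)
    have hsupd : 1 - e ≤ supNormOn (PiTheta θ) (j Φk) := by linarith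
    have hrpos : (0:ℝ) < ‖j Φk pk‖ := by linarith
    obtain ⟨xs, ye, hxs, hye, hpeak, hgap⟩ := hϖfmain (bb k) (hbbpos k) (hbbα k) pk hpkL
    have hϖk4 : ϖf (bb k) ≤ 1/4 := hϖfle _
    have hϖkpos : 0 < ϖf (bb k) := hϖfpos _
    set T : X →L[ℝ] Y := xs.smulRight ye with hTdef
    have hTfin : FinRank T := by
      unfold FinRank
      have hle : LinearMap.range T.toLinearMap ≤ Submodule.span ℝ {ye} := by
        rintro v ⟨x, rfl⟩
        show T x ∈ _
        rw [hTdef]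
        exact Submodule.smul_mem _ _ (Submodule.mem_span_singleton_self ye)
      exact Submodule.finiteDimensional_of_le hle
    have hTnorm : ‖T‖ ≤ 1 := by
      rw [hTdef, ContinuousLinearMap.norm_smulRight_apply]
      nlinarith [norm_nonneg xs, norm_nonneg ye]
    set w : W := ‖j Φk pk‖⁻¹ • (j Φk pk) with hwdef
    have hw : ‖w‖ = 1 := by
      rw [hwdef, norm_smul, norm_inv, norm_norm, inv_mul_cancel₀ hrpos.ne']
    obtain ⟨Ψk, hΨspec, hΨZ⟩ := hjcontains T hTfin w
    have hΨZ1 : ‖Ψk‖ ≤ 1 := by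
      refine hΨZ.trans ?_
      rw [hw, mul_one]
      exact hTnorm
    set Φ' : Z := Φk + bb k • Ψk with hΦ'def
    have hstepZ : ‖Φ' - Φk‖ ≤ bb k := by
      rw [hΦ'def]
      have h1 : Φk + bb k • Ψk - Φk = bb k • Ψk := by abel
      rw [h1, norm_smul, Real.norm_eq_abs, abs_of_pos (hbbpos k)]
      nlinarith [hbbpos k]
    have hvalq : ∀ q ∈ PiTheta θ, j Φ' q = j Φk q + (bb k * (xs q.1 * q.2 ye)) • w := by
      intro q hq
      have h1 : j Φ' = j Φk + bb k • j Ψk := by rw [hΦ'def, map_add, map_smul]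
      rw [h1]
      simp only [Pi.add_apply, Pi.smul_apply]
      rw [hΨspec q hq]
      have h2 : q.2 (T q.1) = xs q.1 * q.2 ye := by
        rw [hTdef, ContinuousLinearMap.smulRight_apply, map_smul, smul_eq_mul]
      rw [h2, smul_smul]
    have habs1 : ∀ q ∈ PiTheta θ, |xs q.1 * q.2 ye| ≤ 1 := by
      intro q hq
      rw [abs_mul]
      have h1 : |xs q.1| ≤ 1 := by
        have h := xs.le_opNorm q.1
        rw [hq.1, mul_one, Real.norm_eq_abs] at h
        exact h.trans hxs
      have h2 : |q.2 ye| ≤ 1 := by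
        have h := (q.2).le_opNorm ye
        rw [hq.2.1, one_mul, Real.norm_eq_abs] at h
        exact h.trans hye
      nlinarith [abs_nonneg (xs q.1), abs_nonneg (q.2 ye)]
    have hub : ∀ q ∈ PiTheta θ, ‖j Φ' q‖ ≤ ‖j Φk q‖ + bb k * |xs q.1 * q.2 ye| := by
      intro q hq
      rw [hvalq q hq]
      calc ‖j Φk q + (bb k * (xs q.1 * q.2 ye)) • w‖
          ≤ ‖j Φk q‖ + ‖(bb k * (xs q.1 * q.2 ye)) • w‖ := norm_add_le _ _
      _ = ‖j Φk q‖ + bb k * |xs q.1 * q.2 ye| := by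
          rw [norm_smul, hw, mul_one, Real.norm_eq_abs, abs_mul, abs_of_pos (hbbpos k)]
    -- value at pk
    have hpeak0 : 0 ≤ xs pk.1 * pk.2 ye := by linarith
    have hjpk : ‖j Φ' pk‖ = ‖j Φk pk‖ + bb k * (xs pk.1 * pk.2 ye) := by
      have h1 : j Φk pk = ‖j Φk pk‖ • w := by
        rw [hwdef, smul_smul, mul_inv_cancel₀ hrpos.ne', one_smul]
      have h2 : j Φ' pk = (‖j Φk pk‖ + bb k * (xs pk.1 * pk.2 ye)) • w := by
        rw [hvalq pk hpkL, add_smul, ← h1]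
      have hpos : 0 < ‖j Φk pk‖ + bb k * (xs pk.1 * pk.2 ye) := by
        nlinarith [hbbpos k]
      rw [h2, norm_smul, hw, mul_one, Real.norm_eq_abs, abs_of_pos hpos]
    have hsuplb' : ‖j Φk pk‖ + bb k * (xs pk.1 * pk.2 ye) ≤ supNormOn (PiTheta θ) (j Φ') := by
      rw [← hjpk]
      exact hevalle Φ' pk hpkL
    have hsupub' : supNormOn (PiTheta θ) (j Φ') ≤ supNormOn (PiTheta θ) (j Φk) + bb k := by
      apply hsuple
      intro q hq
      have h1 := hub q hq
      have h2 := habs1 q hq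
      have h3 := hevalle Φk q hq
      nlinarith [hbbpos k, abs_nonneg (xs q.1 * q.2 ye)]
    -- pick an almost-maximizing point
    obtain ⟨q, hqL, hq⟩ := hexlt Φ' (supNormOn (PiTheta θ) (j Φ') - γ (k+1))
      (sub_lt_self _ (hγpos (k+1)))
    have hclaim : 1 - 2 * ϖf (bb k) < |xs q.1 * q.2 ye| := by
      by_contra hcon
      push_neg at hcon
      have h1 : ‖j Φ' q‖ ≤ supNormOn (PiTheta θ) (j Φk) + bb k * (1 - 2*ϖf (bb k)) := by
        have := hub q hqL
        have h2 := hevalle Φk q hqL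
        nlinarith [hbbpos k]
      have h2 : supNormOn (PiTheta θ) (j Φk) - γ k + bb k * (1 - ϖf (bb k)) ≤
          supNormOn (PiTheta θ) (j Φ') := by
        have h3 : bb k * (1 - ϖf (bb k)) ≤ bb k * (xs pk.1 * pk.2 ye) :=
          mul_le_mul_of_nonneg_left hpeak (hbbpos k).le
        linarith
      have h4 := hγsum k
      have h5 : 0 < bb k * ϖf (bb k) := mul_pos (hbbpos k) hϖkpos
      nlinarith
    have hcases : ‖pk.1 - q.1‖ + ‖pk.2 - q.2‖ < bb k ∨ ‖pk.1 + q.1‖ + ‖pk.2 + q.2‖ < bb k := by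
      by_contra hc
      push_neg at hc
      exact absurd (hgap q hqL hc.1 hc.2) (not_le.2 hclaim)
    have hslb' : 1 - S (k+1) ≤ supNormOn (PiTheta θ) (j Φ') := by
      rw [hSsucc k]
      have h3 : 0 ≤ bb k * (xs pk.1 * pk.2 ye) := mul_nonneg (hbbpos k).le hpeak0
      linarith
    have hZcum' : ‖Φ' - Φ‖ ≤ S (k+1) := by
      calc ‖Φ' - Φ‖ ≤ ‖Φ' - Φk‖ + ‖Φk - Φ‖ := norm_sub_le_norm_sub_add_norm_sub _ _ _
      _ ≤ bb k + S k := add_le_add hstepZ hZcum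
      _ = S (k+1) := by rw [hSsucc k]; ring
    rcases hcases with hcase | hcase
    · refine ⟨(Φ', q), ⟨hqL, hq, hslb', hZcum', ?_⟩, hstepZ, ?_⟩
      · show ‖q.1 - p.1‖ + ‖q.2 - p.2‖ ≤ S (k+1)
        have t1 : ‖q.1 - p.1‖ ≤ ‖q.1 - pk.1‖ + ‖pk.1 - p.1‖ :=
          norm_sub_le_norm_sub_add_norm_sub _ _ _
        have t2 : ‖q.2 - p.2‖ ≤ ‖q.2 - pk.2‖ + ‖pk.2 - p.2‖ :=
          norm_sub_le_norm_sub_add_norm_sub _ _ _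
        rw [norm_sub_rev q.1 pk.1, norm_sub_rev q.2 pk.2] at *
        rw [hSsucc k]
        linarith
      · show ‖q.1 - pk.1‖ + ‖q.2 - pk.2‖ ≤ bb k
        rw [norm_sub_rev q.1 pk.1, norm_sub_rev q.2 pk.2]
        linarith
    · have hnqL : -q ∈ PiTheta θ := hLsymm q hqL
      have hjeven : j Φ' (-q) = j Φ' q := (hjmem Φ').2.2 q hqL
      have hq' : supNormOn (PiTheta θ) (j Φ') - γ (k+1) < ‖j Φ' (-q)‖ := by
        rw [hjeven]; exact hq
      have hd1 : ‖(-q).1 - pk.1‖ = ‖pk.1 + q.1‖ := by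
        show ‖-q.1 - pk.1‖ = _
        rw [show -q.1 - pk.1 = -(pk.1 + q.1) by abel, norm_neg]
      have hd2 : ‖(-q).2 - pk.2‖ = ‖pk.2 + q.2‖ := by
        show ‖-q.2 - pk.2‖ = _
        rw [show -q.2 - pk.2 = -(pk.2 + q.2) by abel, norm_neg]
      refine ⟨(Φ', -q), ⟨hnqL, hq', hslb', hZcum', ?_⟩, hstepZ, ?_⟩
      · show ‖(-q).1 - p.1‖ + ‖(-q).2 - p.2‖ ≤ S (k+1)
        have t1 : ‖(-q).1 - p.1‖ ≤ ‖(-q).1 - pk.1‖ + ‖pk.1 - p.1‖ :=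
          norm_sub_le_norm_sub_add_norm_sub _ _ _
        have t2 : ‖(-q).2 - p.2‖ ≤ ‖(-q).2 - pk.2‖ + ‖pk.2 - p.2‖ :=
          norm_sub_le_norm_sub_add_norm_sub _ _ _
        rw [hd1] at t1
        rw [hd2] at t2
        rw [hSsucc k]
        linarith
      · show ‖(-q).1 - pk.1‖ + ‖(-q).2 - pk.2‖ ≤ bb k
        rw [hd1, hd2]
        linarith

  have hInv0 : BPBInv θ j Φ p γ S 0 (Φ, p) := by
    refine ⟨hp, ?_, ?_, ?_, ?_⟩
    · show supNormOn (PiTheta θ) (j Φ) - γ 0 < ‖j Φ p‖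
      rw [hΦ1]; exact hΦp
    · show 1 - S 0 ≤ supNormOn (PiTheta θ) (j Φ)
      rw [hS0, hΦ1]; norm_num
    · show ‖Φ - Φ‖ ≤ S 0
      rw [hS0]; simp
    · show ‖p.1 - p.1‖ + ‖p.2 - p.2‖ ≤ S 0
      rw [hS0]; simp
  obtain ⟨u, hu0, huInv, huRel⟩ := bpb_rec _ _ _ hInv0 step
  set Φs : ℕ → Z := fun k => (u k).1 with hΦsdef
  set ps : ℕ → X × (Y →L[ℝ] ℝ) := fun k => (u k).2 with hpsdef
  have hpsL : ∀ k, ps k ∈ PiTheta θ := fun k => (huInv k).1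
  have hvalk : ∀ k, supNormOn (PiTheta θ) (j (Φs k)) - γ k < ‖j (Φs k) (ps k)‖ :=
    fun k => (huInv k).2.1
  have hZcum : ∀ k, ‖Φs k - Φ‖ ≤ S k := fun k => (huInv k).2.2.2.1
  have hpcum : ∀ k, ‖(ps k).1 - p.1‖ + ‖(ps k).2 - p.2‖ ≤ S k := fun k => (huInv k).2.2.2.2
  have hbbk : ∀ k, bb k ≤ (e/2) * (1/2)^k := by
    intro k
    rw [hbbdef]
    simp only [pow_succ]
    have h0 : (0:ℝ) ≤ (1/2:ℝ)^k := by positivity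
    nlinarith
  have hrelZ : ∀ k, dist (Φs k) (Φs (k+1)) ≤ (e/2) * (1/2)^k := by
    intro k
    rw [dist_eq_norm, norm_sub_rev]
    exact (huRel k).1.trans (hbbk k)
  obtain ⟨Ψi, hΨi⟩ := cauchySeq_tendsto_of_complete
    (cauchySeq_of_le_geometric (1/2) (e/2) (by norm_num) hrelZ)
  have htailZ : ∀ k, ‖Φs k - Ψi‖ ≤ e * (1/2)^k := by
    intro k
    have h := dist_le_of_le_geometric_of_tendsto (1/2) (e/2) (by norm_num) hrelZ hΨi k
    rw [dist_eq_norm] at h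
    calc ‖Φs k - Ψi‖ ≤ (e/2) * (1/2)^k / (1 - 1/2) := h
    _ = e * (1/2)^k := by ring
  have hrelP : ∀ k, dist (ps k) (ps (k+1)) ≤ (e/2) * (1/2)^k := by
    intro k
    have h := (huRel k).2
    have hn1 : (0:ℝ) ≤ ‖(ps (k+1)).1 - (ps k).1‖ := norm_nonneg _
    have hn2 : (0:ℝ) ≤ ‖(ps (k+1)).2 - (ps k).2‖ := norm_nonneg _
    rw [Prod.dist_eq]
    have hb := hbbk k
    refine max_le ?_ ?_
    · rw [dist_eq_norm, norm_sub_rev]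
      linarith
    · rw [dist_eq_norm, norm_sub_rev]
      linarith
  obtain ⟨pi, hpi⟩ := cauchySeq_tendsto_of_complete
    (cauchySeq_of_le_geometric (1/2) (e/2) (by norm_num) hrelP)
  have hps1 : Tendsto (fun k => (ps k).1) atTop (𝓝 pi.1) := (continuous_fst.tendsto pi).comp hpi
  have hps2 : Tendsto (fun k => (ps k).2) atTop (𝓝 pi.2) := (continuous_snd.tendsto pi).comp hpi
  have hpi1 : ‖pi.1‖ = 1 := by
    have h1 : Tendsto (fun k => ‖(ps k).1‖) atTop (𝓝 ‖pi.1‖) :=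
      (continuous_norm.tendsto _).comp hps1
    have h2 : (fun k => ‖(ps k).1‖) = fun _ => (1:ℝ) := funext fun k => (hpsL k).1
    rw [h2] at h1
    exact tendsto_nhds_unique h1 tendsto_const_nhds
  have hpi2 : ‖pi.2‖ = 1 := by
    have h1 : Tendsto (fun k => ‖(ps k).2‖) atTop (𝓝 ‖pi.2‖) :=
      (continuous_norm.tendsto _).comp hps2
    have h2 : (fun k => ‖(ps k).2‖) = fun _ => (1:ℝ) := funext fun k => (hpsL k).2.1
    rw [h2] at h1
    exact tendsto_nhds_unique h1 tendsto_const_nhds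
  have hsumdist : Tendsto (fun k => ‖(ps k).1 - pi.1‖ + ‖(ps k).2 - pi.2‖) atTop (𝓝 0) := by
    have t1 : Tendsto (fun k => ‖(ps k).1 - pi.1‖) atTop (𝓝 0) :=
      tendsto_iff_norm_sub_tendsto_zero.mp hps1
    have t2 : Tendsto (fun k => ‖(ps k).2 - pi.2‖) atTop (𝓝 0) :=
      tendsto_iff_norm_sub_tendsto_zero.mp hps2
    simpa using t1.add t2
  have htheta : θ pi = 1 := by
    by_contra hcon
    have hr : 0 < |θ pi - 1| := abs_pos.2 (sub_ne_zero.2 hcon)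
    obtain ⟨α, hαpos, hα⟩ := hθuc _ hr
    obtain ⟨k, hk⟩ := (hsumdist.eventually_lt_const hαpos).exists
    have h := hα (ps k) pi (hpsL k).1 (hpsL k).2.1 hpi1 hpi2 hk
    rw [(hpsL k).2.2, abs_sub_comm] at h
    exact absurd h (lt_irrefl _)
  have hpiL : pi ∈ PiTheta θ := ⟨hpi1, hpi2, htheta⟩
  have hΨiΦ : ‖Ψi - Φ‖ ≤ e := by
    have h1 : Tendsto (fun k => ‖Φs k - Φ‖) atTop (𝓝 ‖Ψi - Φ‖) :=
      (continuous_norm.tendsto _).comp (hΨi.sub tendsto_const_nhds)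
    exact le_of_tendsto h1 (Eventually.of_forall fun k => (hZcum k).trans (hSle k))
  set v : ℝ := supNormOn (PiTheta θ) (j Ψi) with hvdef
  have hvub : v ≤ 1 + e := by
    have h := hlip Ψi Φ
    rw [hΦ1] at h
    linarith
  have hvlb : 1 - e ≤ v := by
    have h := hlip Φ Ψi
    rw [hΦ1, norm_sub_rev] at h
    linarith
  have hvpos : 0 < v := by linarith
  have htend1 : Tendsto (fun k => ‖j Ψi (ps k)‖) atTop (𝓝 ‖j Ψi pi‖) := by
    have hc : ContinuousWithinAt (j Ψi) (PiTheta θ) pi := (hjmem Ψi).1 pi hpiL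
    have hW : Tendsto ps atTop (𝓝[PiTheta θ] pi) :=
      tendsto_nhdsWithin_of_tendsto_nhds_of_eventually_within ps hpi
        (Eventually.of_forall hpsL)
    exact (continuous_norm.tendsto _).comp (hc.tendsto.comp hW)
  have hlow : ∀ k, v - 3 * (e * (1/2)^k) ≤ ‖j Ψi (ps k)‖ := by
    intro k
    have h1 : ‖j (Φs k) (ps k) - j Ψi (ps k)‖ ≤ e * (1/2)^k := by
      rw [hsubeval]
      exact ((hevalle _ _ (hpsL k)).trans (hjnorm _)).trans (htailZ k)
    have h2 := hvalk k
    have h3 : v ≤ supNormOn (PiTheta θ) (j (Φs k)) + e * (1/2)^k := by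
      have h := hlip Ψi (Φs k)
      have h4 : ‖Ψi - Φs k‖ ≤ e * (1/2)^k := by
        rw [norm_sub_rev]; exact htailZ k
      linarith
    have h5 : γ k ≤ e * (1/2)^k := by
      have h6 := hγbb k
      have h7 := hbbk k
      have h8 : (0:ℝ) ≤ (1/2:ℝ)^k := by positivity
      nlinarith
    have h9 := norm_sub_norm_le (j (Φs k) (ps k)) (j Ψi (ps k))
    linarith
  have hattain_ge : v ≤ ‖j Ψi pi‖ := by
    have hpow : Tendsto (fun k : ℕ => ((1:ℝ)/2)^k) atTop (𝓝 0) :=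
      tendsto_pow_atTop_nhds_zero_of_lt_one (by norm_num) (by norm_num)
    have h0 : Tendsto (fun k : ℕ => v - 3 * (e * (1/2)^k)) atTop (𝓝 (v - 3 * (e * 0))) :=
      tendsto_const_nhds.sub (((hpow.const_mul e).const_mul 3))
    rw [mul_zero, mul_zero, sub_zero] at h0
    exact le_of_tendsto_of_tendsto' h0 htend1 hlow
  have hattain : ‖j Ψi pi‖ = v := le_antisymm (hevalle Ψi pi hpiL) hattain_ge
  have hdistpi : ‖pi.1 - p.1‖ + ‖pi.2 - p.2‖ ≤ e := by
    have t1 : Tendsto (fun k => ‖(ps k).1 - p.1‖) atTop (𝓝 ‖pi.1 - p.1‖) :=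
      (continuous_norm.tendsto _).comp (hps1.sub tendsto_const_nhds)
    have t2 : Tendsto (fun k => ‖(ps k).2 - p.2‖) atTop (𝓝 ‖pi.2 - p.2‖) :=
      (continuous_norm.tendsto _).comp (hps2.sub tendsto_const_nhds)
    exact le_of_tendsto (t1.add t2) (Eventually.of_forall fun k => (hpcum k).trans (hSle k))
  have hsmul : ∀ q : X × (Y →L[ℝ] ℝ), j (v⁻¹ • Ψi) q = v⁻¹ • (j Ψi q) := by
    intro q
    rw [map_smul]
    rfl
  have hnorm1 : ‖j (v⁻¹ • Ψi) pi‖ = 1 := by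
    rw [hsmul, norm_smul, Real.norm_eq_abs, abs_of_pos (inv_pos.2 hvpos), hattain,
      inv_mul_cancel₀ hvpos.ne']
  refine ⟨v⁻¹ • Ψi, ?_, pi, hpiL, hnorm1, ?_, ?_⟩
  · refine le_antisymm (hsuple _ 1 ?_) ?_
    · intro q hq
      rw [hsmul, norm_smul, Real.norm_eq_abs, abs_of_pos (inv_pos.2 hvpos)]
      have h1 := hevalle Ψi q hq
      have h2 : v⁻¹ * ‖j Ψi q‖ ≤ v⁻¹ * v :=
        mul_le_mul_of_nonneg_left h1 (inv_pos.2 hvpos).le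
      rw [inv_mul_cancel₀ hvpos.ne'] at h2
      exact h2
    · rw [← hnorm1]
      exact hevalle _ _ hpiL
  · linarith
  · have hbound : ∀ q ∈ PiTheta θ, ‖j (v⁻¹ • Ψi - Φ) q‖ ≤ 2 * e := by
      intro q hq
      have hdiff : j (v⁻¹ • Ψi - Φ) q = (v⁻¹ • (j Ψi q) - j Ψi q) + (j Ψi q - j Φ q) := by
        rw [← hsubeval, hsmul]
        abel
      have hpart1 : ‖v⁻¹ • (j Ψi q) - j Ψi q‖ ≤ e := by
        have he1 : v⁻¹ • (j Ψi q) - j Ψi q = (v⁻¹ - 1) • (j Ψi q) := by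
          rw [sub_smul, one_smul]
        rw [he1, norm_smul, Real.norm_eq_abs]
        have h1 : ‖j Ψi q‖ ≤ v := hevalle Ψi q hq
        have h2 : |v⁻¹ - 1| * ‖j Ψi q‖ ≤ |v⁻¹ - 1| * v :=
          mul_le_mul_of_nonneg_left h1 (abs_nonneg _)
        have h3 : |v⁻¹ - 1| * v = |1 - v| := by
          have hm : (v⁻¹ - 1) * v = 1 - v := by field_simp
          calc |v⁻¹ - 1| * v = |(v⁻¹ - 1) * v| := by rw [abs_mul, abs_of_pos hvpos]
          _ = |1 - v| := by rw [hm]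
        have h4 : |1 - v| ≤ e := abs_le.2 ⟨by linarith, by linarith⟩
        calc |v⁻¹ - 1| * ‖j Ψi q‖ ≤ |v⁻¹ - 1| * v := h2
        _ = |1 - v| := h3
        _ ≤ e := h4
      have hpart2 : ‖j Ψi q - j Φ q‖ ≤ e := by
        rw [hsubeval]
        exact ((hevalle _ _ hq).trans (hjnorm _)).trans hΨiΦ
      calc ‖j (v⁻¹ • Ψi - Φ) q‖
          ≤ ‖v⁻¹ • (j Ψi q) - j Ψi q‖ + ‖j Ψi q - j Φ q‖ := by
            rw [hdiff]; exact norm_add_le _ _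
      _ ≤ 2 * e := by linarith
    have := hsuple _ (2*e) hbound
    linarith

end
end

section
/- Let X be a uniformly convex real Banach space and Y a real Banach space whose dual Y* is uniformly convex (equivalently, Y is uniformly smooth). Let L be a nonempty closed symmetric subset of S_X × S_{Y*} satisfying: there exists ε₀ > 0 such that for all ε ∈ (0, ε₀) and all (x,y*), (z,t*) ∈ L, if min(‖x−z‖+‖y*−t*‖, ‖x+z‖+‖y*+t*‖) ≥ ε then min(‖x+z‖+‖y*−t*‖, ‖x−z‖+‖y*+t*‖) ≥ ε. Then L has property (P). -/
/-!
Given `(x, y*) ∈ L`, take a norming functional `x*` of `x` and `y_ε` in the unit ball with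
`y*(y_ε)` close to `1`. If `(z, t*) ∈ L` has `|x*(z)| + |t*(y_ε)|` close to
`x*(x) + y*(y_ε) ≈ 2`, both terms are close to `1`, so uniform convexity of `X` and of `Y*`
(through their moduli at `ε / 2`) makes `x` close to `±z` and `y*` close to `±t*`. Whatever the two
signs, one of `d_H(Γ(x, y*), Γ(z, t*))` and `d_H(Γ(-x, y*), Γ(z, t*))` is then `< ε`, which is
excluded when `d_H(Γ(x, y*), Γ(z, t*)) ≥ ε`.
-/

open Filter Topology Set

noncomputable section

variable {X Y : Type*}
  [NormedAddCommGroup X] [NormedSpace ℝ X]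
  [NormedAddCommGroup Y] [NormedSpace ℝ Y]

section Functionals

variable {E : Type*} [NormedAddCommGroup E] [NormedSpace ℝ E]

theorem ContinuousLinearMap.abs_apply_le_one_s7 {f : E →L[ℝ] ℝ} (hf : ‖f‖ ≤ 1) {v : E}
    (hv : ‖v‖ ≤ 1) : |f v| ≤ 1 := by
  simpa using f.le_of_opNorm_le_of_le hf hv

theorem ContinuousLinearMap.apply_le_norm {f : E →L[ℝ] ℝ} (hf : ‖f‖ ≤ 1) (v : E) :
    f v ≤ ‖v‖ :=
  (le_abs_self _).trans (by simpa using f.le_of_opNorm_le hf v)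

theorem ContinuousLinearMap.norm_apply_le (v : E) : ‖ContinuousLinearMap.apply ℝ ℝ v‖ ≤ ‖v‖ :=
  ContinuousLinearMap.opNorm_le_bound _ (norm_nonneg v) fun f => by
    simpa [mul_comm] using f.le_opNorm v

theorem ContinuousLinearMap.exists_norm_le_one_lt_apply_s7 (f : E →L[ℝ] ℝ) {r : ℝ}
    (hr : r < ‖f‖) : ∃ v : E, ‖v‖ ≤ 1 ∧ r < f v := by
  obtain ⟨v, hv, hrv⟩ := f.exists_lt_apply_of_lt_opNorm hr
  rcases le_or_gt 0 (f v) with h | h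
  · exact ⟨v, hv.le, by rwa [Real.norm_of_nonneg h] at hrv⟩
  · exact ⟨-v, by simpa using hv.le, by rw [Real.norm_of_nonpos h.le] at hrv; simpa using hrv⟩

end Functionals

section UniformConvex

variable {E : Type*} [NormedAddCommGroup E] [NormedSpace ℝ E] [UniformConvexSpace E]

theorem exists_forall_sphere_norm_sub_lt_of_lt_apply_add {ε : ℝ} (hε : 0 < ε) :
    ∃ δ > 0, ∀ f : E →L[ℝ] ℝ, ‖f‖ ≤ 1 → ∀ ⦃u v : E⦄, ‖u‖ = 1 → ‖v‖ = 1 →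
      2 - δ < f u + f v → ‖u - v‖ < ε := by
  obtain ⟨δ, hδ, huc⟩ := exists_forall_sphere_dist_add_le_two_sub E hε
  refine ⟨δ, hδ, fun f hf u v hu hv hfuv => lt_of_not_ge fun hfar => ?_⟩
  have hle : f (u + v) ≤ ‖u + v‖ := f.apply_le_norm hf (u + v)
  have hnorm : ‖u + v‖ ≤ 2 - δ := huc hu hv hfar
  rw [map_add] at hle
  linarith

theorem exists_forall_sphere_norm_sub_lt_or_norm_add_lt {ε : ℝ} (hε : 0 < ε) :
    ∃ δ > 0, ∀ f : E →L[ℝ] ℝ, ‖f‖ ≤ 1 → ∀ ⦃u v : E⦄, ‖u‖ = 1 → ‖v‖ = 1 →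
      1 - δ < f u → 1 - δ < |f v| → ‖u - v‖ < ε ∨ ‖u + v‖ < ε := by
  obtain ⟨δ, hδ, hclose⟩ := exists_forall_sphere_norm_sub_lt_of_lt_apply_add (E := E) hε
  refine ⟨δ / 2, half_pos hδ, fun f hf u v hu hv hfu hfv => ?_⟩
  rcases abs_cases (f v) with ⟨hfv_abs, -⟩ | ⟨hfv_abs, -⟩
  · exact Or.inl (hclose f hf hu hv (by linarith))
  · refine Or.inr ?_
    rw [← sub_neg_eq_add]
    exact hclose f hf hu (by rwa [norm_neg]) (by rw [map_neg]; linarith)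

end UniformConvex

theorem min_lt_or_min_lt_of_lt {α : Type*} [AddCommMonoid α] [LinearOrder α]
    [IsOrderedCancelAddMonoid α] {a b c d r s : α}
    (hab : a < r ∨ b < r) (hcd : c < s ∨ d < s) :
    min (a + c) (b + d) < r + s ∨ min (b + c) (a + d) < r + s := by
  rcases hab with hab | hab <;> rcases hcd with hcd | hcd
  · exact Or.inl (min_lt_of_left_lt (add_lt_add hab hcd))
  · exact Or.inr (min_lt_of_right_lt (add_lt_add hab hcd))
  · exact Or.inr (min_lt_of_left_lt (add_lt_add hab hcd))
  · exact Or.inl (min_lt_of_right_lt (add_lt_add hab hcd))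

theorem statement7_general
    [UniformConvexSpace X] [UniformConvexSpace (Y →L[ℝ] ℝ)]
    (L : Set (X × (Y →L[ℝ] ℝ)))
    (hLsphere : ∀ p ∈ L, ‖p.1‖ = 1 ∧ ‖p.2‖ = 1)
    (hsep : ∃ ε₀ > (0 : ℝ), ∀ ε : ℝ, 0 < ε → ε < ε₀ → ∀ p ∈ L, ∀ q ∈ L,
      ε ≤ dHG p q →
        ε ≤ min (‖p.1 + q.1‖ + ‖p.2 - q.2‖) (‖p.1 - q.1‖ + ‖p.2 + q.2‖)) :
    PropP L := by
  obtain ⟨ε₀, hε₀, hsep⟩ := hsep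
  refine ⟨ε₀, hε₀, fun ε hε hεε₀ => ?_⟩
  obtain ⟨δX, hδX, hX⟩ := exists_forall_sphere_norm_sub_lt_or_norm_add_lt (E := X) (half_pos hε)
  obtain ⟨δY, hδY, hY⟩ :=
    exists_forall_sphere_norm_sub_lt_or_norm_add_lt (E := Y →L[ℝ] ℝ) (half_pos hε)
  set δ := min δX δY
  have hδ : 0 < δ := lt_min hδX hδY
  refine ⟨δ / 2, half_pos hδ, fun ⟨x, ys⟩ hp => ?_⟩
  obtain ⟨hx, hys⟩ : ‖x‖ = 1 ∧ ‖ys‖ = 1 := hLsphere _ hp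
  obtain ⟨xs, hxs, hxsx⟩ := exists_dual_vector ℝ x (by simp [hx])
  obtain ⟨ye, hye, hysye⟩ := ys.exists_norm_le_one_lt_apply_s7 (r := 1 - δ / 2) (by simp [hys, hδ])
  refine ⟨xs, ye, hxs.le, hye, fun ⟨z, ts⟩ hq hd => ?_⟩
  obtain ⟨hz, hts⟩ : ‖z‖ = 1 ∧ ‖ts‖ = 1 := hLsphere _ hq
  rw [hx, RCLike.ofReal_real_eq_id, id] at hxsx
  by_contra! hbig
  dsimp only at hbig hd
  have hxsz := xs.abs_apply_le_one_s7 hxs.le hz.le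
  have htsye := ts.abs_apply_le_one_s7 hts.le hye
  have hysye_le := (ys.apply_le_norm hys.le ye).trans hye
  have hδX' : δ ≤ δX := min_le_left δX δY
  have hδY' : δ ≤ δY := min_le_right δX δY
  have hxz : ‖x - z‖ < ε / 2 ∨ ‖x + z‖ < ε / 2 :=
    hX xs hxs.le hx hz (by linarith) (by linarith)
  have hyt : ‖ys - ts‖ < ε / 2 ∨ ‖ys + ts‖ < ε / 2 :=
    hY (.apply ℝ ℝ ye) ((ContinuousLinearMap.norm_apply_le ye).trans hye) hys hts
      (by rw [ContinuousLinearMap.apply_apply]; linarith)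
      (by rw [ContinuousLinearMap.apply_apply]; linarith)
  have hmix := hsep ε hε hεε₀ _ hp _ hq hd
  unfold dHG at hd
  rcases min_lt_or_min_lt_of_lt hxz hyt with h | h <;> linarith

theorem statement7
    [CompleteSpace X] [CompleteSpace Y]
    [UniformConvexSpace X] [UniformConvexSpace (Y →L[ℝ] ℝ)]
    (L : Set (X × (Y →L[ℝ] ℝ))) (hLne : L.Nonempty)
    (hLsphere : ∀ p ∈ L, ‖p.1‖ = 1 ∧ ‖p.2‖ = 1)
    (hLsym : ∀ p ∈ L, -p ∈ L) (hLclosed : IsClosed L)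
    (hsep : ∃ ε₀ > (0 : ℝ), ∀ ε : ℝ, 0 < ε → ε < ε₀ → ∀ p ∈ L, ∀ q ∈ L,
      ε ≤ dHG p q →
        ε ≤ min (‖p.1 + q.1‖ + ‖p.2 - q.2‖) (‖p.1 - q.1‖ + ‖p.2 + q.2‖)) :
    PropP L :=
  statement7_general L hLsphere hsep
end
end

section
/- Let X and Y be real Banach spaces and let θ : S_X × S_{Y*} → ℝ be a nonzero function such that (i) θ is uniformly continuous with modulus of uniform continuity α (i.e. for every r > 0 and all (x₁,y₁*), (x₂,y₂*) ∈ S_X × S_{Y*}, ‖x₁−x₂‖ + ‖y₁*−y₂*‖ < α(r) implies |θ(x₂,y₂*) − θ(x₁,y₁*)| < r), and (ii) θ(−x,y*) = θ(x,−y*) = −θ(x,y*) for all (x,y*) ∈ S_X × S_{Y*}. Let s > 0 be such that θ⁻¹([s,∞)) is nonempty and let L be any nonempty subset of θ⁻¹([s,∞)). Then for all (x,y*), (z,t*) ∈ L one has min(‖x+z‖ + ‖y*−t*‖, ‖x−z‖ + ‖y*+t*‖) ≥ α(s). -/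
open Filter Topology Set

noncomputable section

theorem statement8 {X Y : Type*}
    [NormedAddCommGroup X] [NormedSpace ℝ X] [CompleteSpace X]
    [NormedAddCommGroup Y] [NormedSpace ℝ Y] [CompleteSpace Y]
    (θ : X × (Y →L[ℝ] ℝ) → ℝ)
    (hθnz : ∃ p : X × (Y →L[ℝ] ℝ), ‖p.1‖ = 1 ∧ ‖p.2‖ = 1 ∧ θ p ≠ 0)
    (α : ℝ → ℝ) (hαpos : ∀ r : ℝ, 0 < r → 0 < α r)
    (hmod : ∀ r : ℝ, 0 < r → ∀ p q : X × (Y →L[ℝ] ℝ),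
      ‖p.1‖ = 1 → ‖p.2‖ = 1 → ‖q.1‖ = 1 → ‖q.2‖ = 1 →
      ‖p.1 - q.1‖ + ‖p.2 - q.2‖ < α r → |θ q - θ p| < r)
    (hθodd : ∀ p : X × (Y →L[ℝ] ℝ), ‖p.1‖ = 1 → ‖p.2‖ = 1 →
      θ (-p.1, p.2) = -θ p ∧ θ (p.1, -p.2) = -θ p)
    (s : ℝ) (hs : 0 < s)
    (hpre : {p : X × (Y →L[ℝ] ℝ) | ‖p.1‖ = 1 ∧ ‖p.2‖ = 1 ∧ s ≤ θ p}.Nonempty)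
    (L : Set (X × (Y →L[ℝ] ℝ))) (hLne : L.Nonempty)
    (hLsub : L ⊆ {p : X × (Y →L[ℝ] ℝ) | ‖p.1‖ = 1 ∧ ‖p.2‖ = 1 ∧ s ≤ θ p}) :
    ∀ p ∈ L, ∀ q ∈ L,
      α s ≤ min (‖p.1 + q.1‖ + ‖p.2 - q.2‖) (‖p.1 - q.1‖ + ‖p.2 + q.2‖) := by
  intro p hp q hq
  obtain ⟨hp1, hp2, hps⟩ := hLsub hp
  obtain ⟨hq1, hq2, hqs⟩ := hLsub hq
  obtain ⟨hodd1, hodd2⟩ := hθodd p hp1 hp2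
  rw [le_min_iff]
  constructor
  · by_contra h
    push_neg at h
    have := hmod s hs (-p.1, p.2) q (by simpa using hp1) hp2 hq1 hq2
      (by rw [show (-p.1) - q.1 = -(p.1 + q.1) by abel, norm_neg]; exact h)
    rw [hodd1] at this
    have : θ q + θ p < s := lt_of_abs_lt (by simpa [sub_neg_eq_add] using this)
    linarith
  · by_contra h
    push_neg at h
    have := hmod s hs (p.1, -p.2) q hp1 (by simpa using hp2) hq1 hq2
      (by show ‖p.1 - q.1‖ + ‖(-p.2) - q.2‖ < α s; rw [show (-p.2) - q.2 = -(p.2 + q.2) by abel, norm_neg]; exact h)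
    rw [hodd2] at this
    have : θ q + θ p < s := lt_of_abs_lt (by simpa [sub_neg_eq_add] using this)
    linarith

end
end

section
/- Let X be a uniformly convex real Banach space and Y a real Banach space whose dual Y* is uniformly convex (equivalently, Y is uniformly smooth). Let G : S_X → S_Y be a uniformly continuous map satisfying G(−x) = −G(x) for all x ∈ S_X, and suppose the set Π_G(X,Y) := {(x,y*) ∈ S_X × S_{Y*} : y*(G(x)) = 1} is nonempty. Then Π_G(X,Y) is a closed symmetric subset of S_X × S_{Y*} and has property (P). -/
open Filter Topology Set

noncomputable section

variable {X Y : Type*}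
  [NormedAddCommGroup X] [NormedSpace ℝ X]
  [NormedAddCommGroup Y] [NormedSpace ℝ Y]

theorem statement10
    [CompleteSpace X] [CompleteSpace Y]
    [UniformConvexSpace X] [UniformConvexSpace (Y →L[ℝ] ℝ)]
    (G : X → Y)
    (hGsphere : ∀ x : X, ‖x‖ = 1 → ‖G x‖ = 1)
    (hGuc : ∀ r : ℝ, 0 < r → ∃ δ > (0 : ℝ), ∀ x z : X,
      ‖x‖ = 1 → ‖z‖ = 1 → ‖x - z‖ < δ → ‖G x - G z‖ < r)
    (hGodd : ∀ x : X, ‖x‖ = 1 → G (-x) = -(G x))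
    (hne : {p : X × (Y →L[ℝ] ℝ) | ‖p.1‖ = 1 ∧ ‖p.2‖ = 1 ∧ p.2 (G p.1) = 1}.Nonempty) :
    IsClosed {p : X × (Y →L[ℝ] ℝ) | ‖p.1‖ = 1 ∧ ‖p.2‖ = 1 ∧ p.2 (G p.1) = 1} ∧
    (∀ p ∈ {p : X × (Y →L[ℝ] ℝ) | ‖p.1‖ = 1 ∧ ‖p.2‖ = 1 ∧ p.2 (G p.1) = 1},
      -p ∈ {p : X × (Y →L[ℝ] ℝ) | ‖p.1‖ = 1 ∧ ‖p.2‖ = 1 ∧ p.2 (G p.1) = 1}) ∧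
    PropP {p : X × (Y →L[ℝ] ℝ) | ‖p.1‖ = 1 ∧ ‖p.2‖ = 1 ∧ p.2 (G p.1) = 1} := by
  set L : Set (X × (Y →L[ℝ] ℝ)) :=
    {p : X × (Y →L[ℝ] ℝ) | ‖p.1‖ = 1 ∧ ‖p.2‖ = 1 ∧ p.2 (G p.1) = 1} with hL
  -- Symmetry
  have hsym : ∀ p ∈ L, -p ∈ L := by
    rintro ⟨x, y⟩ ⟨hx, hy, hxy⟩
    refine ⟨by simpa using hx, by simpa using hy, ?_⟩
    simp only [Prod.fst_neg, Prod.snd_neg]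
    rw [hGodd x hx]
    simpa using hxy
  refine ⟨?_, hsym, ?_⟩
  · -- closedness
    rw [← isSeqClosed_iff_isClosed]
    intro u p hu hup
    have h1 : Tendsto (fun n => (u n).1) atTop (𝓝 p.1) :=
      (continuous_fst.tendsto p).comp hup
    have h2 : Tendsto (fun n => (u n).2) atTop (𝓝 p.2) :=
      (continuous_snd.tendsto p).comp hup
    have hp1 : ‖p.1‖ = 1 :=
      tendsto_nhds_unique
        (((continuous_norm.tendsto p.1).comp h1).congr fun n => (hu n).1)
        tendsto_const_nhds
    have hp2 : ‖p.2‖ = 1 :=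
      tendsto_nhds_unique
        (((continuous_norm.tendsto p.2).comp h2).congr fun n => (hu n).2.1)
        tendsto_const_nhds
    refine ⟨hp1, hp2, ?_⟩
    -- G (u n).1 → G p.1
    have hG : Tendsto (fun n => G (u n).1) atTop (𝓝 (G p.1)) := by
      rw [Metric.tendsto_nhds]
      intro ρ hρ
      obtain ⟨δ, hδ, hδ'⟩ := hGuc ρ hρ
      have hev : ∀ᶠ n in atTop, dist (u n).1 p.1 < δ :=
        (Metric.tendsto_nhds.mp h1) δ hδ
      filter_upwards [hev] with n hn
      rw [dist_eq_norm] at hn ⊢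
      exact hδ' (u n).1 p.1 (hu n).1 hp1 hn
    have hval : Tendsto (fun n => (u n).2 (G (u n).1)) atTop (𝓝 (p.2 (G p.1))) := by
      have hb : Tendsto (fun n => ((u n).2, G (u n).1)) atTop (𝓝 (p.2, G p.1)) :=
        h2.prodMk_nhds hG
      exact (isBoundedBilinearMap_apply.continuous.tendsto _).comp hb
    exact tendsto_nhds_unique (hval.congr fun n => (hu n).2.2) tendsto_const_nhds
  · -- Property (P)
    refine ⟨1, one_pos, ?_⟩
    intro ε hε hε1
    obtain ⟨r, hr⟩ : ∃ r : ℝ, r = ε / 4 := ⟨_, rfl⟩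
    have hrpos : 0 < r := by rw [hr]; positivity
    have h2r : 2 * r < ε := by rw [hr]; linarith
    -- uniform convexity of Y*
    obtain ⟨δY, hδY, hYuc⟩ :=
      exists_forall_sphere_dist_add_le_two_sub (Y →L[ℝ] ℝ) hrpos
    -- uniform continuity of G at scale δY
    obtain ⟨δG, hδG, hGδ⟩ := hGuc δY hδY
    -- uniform convexity of X at scale min r δG
    have hrδG : (0:ℝ) < min r δG := lt_min hrpos hδG
    obtain ⟨δX, hδX, hXuc⟩ := exists_forall_sphere_dist_add_le_two_sub X hrδG
    refine ⟨δX, hδX, ?_⟩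
    rintro ⟨x, ys⟩ ⟨hx, hys, hxy⟩
    obtain ⟨xs, hxs, hxsx⟩ := exists_dual_vector ℝ x (by
      intro h; rw [h] at hx; simp at hx)
    refine ⟨xs, G x, le_of_eq hxs, le_of_eq (hGsphere x hx), ?_⟩
    have hxsx1 : xs x = 1 := by rw [hx] at hxsx; exact_mod_cast hxsx
    rintro ⟨z, ts⟩ ⟨hz, hts, hzt⟩ hfar
    simp only [dHG, le_min_iff] at hfar
    show |xs z| + |ts (G x)| ≤ xs x + ys (G x) - δX
    rw [hxsx1, hxy]
    -- key lemma: if xs z is close to 1 and (z,ts) ∈ L then both distances are small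
    have key : ∀ z' : X, ∀ ts' : Y →L[ℝ] ℝ, ‖z'‖ = 1 → ‖ts'‖ = 1 → ts' (G z') = 1 →
        1 - δX < xs z' → ‖x - z'‖ + ‖ys - ts'‖ < ε := by
      intro z' ts' hz' hts' hzt' hclose
      -- ‖x + z'‖ > 2 - δX, so ‖x - z'‖ < min r δG
      have h1 : ‖x - z'‖ < min r δG := by
        by_contra h
        push_neg at h
        have := hXuc hx hz' h
        have h2 : (2:ℝ) - δX < ‖x + z'‖ := by
          calc (2:ℝ) - δX < 1 + xs z' := by linarith
          _ = xs (x + z') := by rw [map_add, hxsx1]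
          _ ≤ ‖xs (x + z')‖ := le_abs_self _
          _ ≤ ‖xs‖ * ‖x + z'‖ := xs.le_opNorm _
          _ = ‖x + z'‖ := by rw [hxs, one_mul]
        linarith
      -- hence ‖G x - G z'‖ < δY, so ts' (G x) > 1 - δY
      have h2 : ‖G x - G z'‖ < δY := hGδ x z' hx hz' (h1.trans_le (min_le_right _ _))
      have h3 : 1 - δY < ts' (G x) := by
        have : ts' (G z') - ts' (G x) ≤ ‖G x - G z'‖ := by
          calc ts' (G z') - ts' (G x) = ts' (G z' - G x) := by rw [map_sub]
          _ ≤ ‖ts' (G z' - G x)‖ := le_abs_self _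
          _ ≤ ‖ts'‖ * ‖G z' - G x‖ := ts'.le_opNorm _
          _ = ‖G x - G z'‖ := by rw [hts', one_mul, norm_sub_rev]
        linarith [hzt' ▸ this]
      -- so ‖ys + ts'‖ > 2 - δY, whence ‖ys - ts'‖ < r
      have h4 : ‖ys - ts'‖ < r := by
        by_contra h
        push_neg at h
        have := hYuc hys hts' h
        have h5 : (2:ℝ) - δY < ‖ys + ts'‖ := by
          calc (2:ℝ) - δY < 1 + ts' (G x) := by linarith
          _ = (ys + ts') (G x) := by
              simp [ContinuousLinearMap.add_apply, hxy]
          _ ≤ ‖(ys + ts') (G x)‖ := le_abs_self _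
          _ ≤ ‖ys + ts'‖ * ‖G x‖ := (ys + ts').le_opNorm _
          _ = ‖ys + ts'‖ := by rw [hGsphere x hx, mul_one]
        linarith
      have h6 := h1.trans_le (min_le_left _ _)
      linarith
    -- conclude by contradiction
    by_contra hcon
    push_neg at hcon
    have hts_le : |ts (G x)| ≤ 1 := by
      calc |ts (G x)| = ‖ts (G x)‖ := rfl
      _ ≤ ‖ts‖ * ‖G x‖ := ts.le_opNorm _
      _ = 1 := by rw [hts, hGsphere x hx, one_mul]
    have hxz : 1 - δX < |xs z| := by linarith
    obtain ⟨hfar1, hfar2⟩ := hfar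
    rcases lt_abs.mp hxz with h | h
    · exact absurd hfar1 (not_le.mpr (key z ts hz hts hzt h))
    · have hmz : ‖-z‖ = 1 := by simpa using hz
      have hmts : ‖-ts‖ = 1 := by simpa using hts
      have hmzt : (-ts) (G (-z)) = 1 := by
        rw [hGodd z hz]; simpa using hzt
      have := key (-z) (-ts) hmz hmts hmzt (by simpa using h)
      rw [sub_neg_eq_add, sub_neg_eq_add] at this
      exact absurd hfar2 (not_le.mpr this)
end
end
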